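/- arXiv:1205.6006 — 4 statements merged into one kernel-verified Lean document; each statement's English description precedes it below -/
import Mathlib

section
/- For every μ in the positive root lattice of B_r, Lusztig's q-analogue of the Kostant partition function satisfies 𝒫(μ;q) = Σ_{T ∈ 𝒯(∞), −wt(T) = μ} q^{|T|} as polynomials in q (both sums are finite). -/
/-!
The map `T ↦ Ξ(T)` is a bijection from `𝒯(∞)` onto the Kostant partitions, i.e. the functions on
the positive roots. It carries `-wt(T)` to `Σ_α Ξ(T)(α) α` by definition and `|T|` to
`Σ_α Ξ(T)(α)`, because every letter `x ≻ i` of row `i` is charged to exactly one root, the letter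
`ī` twice.

A marginally large tableau is determined by its counts `ℓ_{i,x}` for `x ≻ i`: working up from the
bottom row, marginal largeness fixes the number of `i`'s in row `i`. Conversely every family of
counts with `ℓ_{i,0} ≤ 1` is realised by such a tableau. Since the roots `β_{i,k}` and `γ_{i,k}`
are pairwise distinct, `Ξ(T)` reads off every count, where `ℓ_{i,0}` and `ℓ_{i,ī}` are recovered
from `2ℓ_{i,ī} + ℓ_{i,0}` by parity, and every Kostant partition arises in this way.
-/

/-- Marginally large semistandard Young tableaux of type `B_r`, on the totally
ordered alphabet `{1 ≺ ⋯ ≺ r ≺ 0 ≺ r̄ ≺ ⋯ ≺ 1̄}`, encoded by the order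
isomorphism onto `{1, …, 2r+1} ⊂ ℕ` sending `k ↦ k`, `0 ↦ r+1`, `k̄ ↦ 2r+2-k`.
Conditions: exactly `r` rows, rows weakly increasing, columns strictly
increasing, first column `1, …, r`, every entry of row `i` is `≼ ī`, the entry
`0` occurs at most once in each row, and the number of `i`-entries in row `i`
exceeds the number of boxes in row `i+1` by exactly one. -/
structure TabB (r : ℕ) where
  row : Fin r → List ℕ
  entry_mem : ∀ i : Fin r, ∀ e ∈ row i, 1 ≤ e ∧ e ≤ 2 * r + 1
  row_weak : ∀ i : Fin r, (row i).Chain' (· ≤ ·)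
  first_col : ∀ i : Fin r, (row i).head? = some (i.1 + 1)
  row_bound : ∀ i : Fin r, ∀ e ∈ row i, e ≤ 2 * r + 1 - i.1
  zero_once : ∀ i : Fin r, (row i).count (r + 1) ≤ 1
  col_le : ∀ i : Fin r, ∀ h : i.1 + 1 < r,
    (row ⟨i.1 + 1, h⟩).length ≤ (row i).length
  col_strict : ∀ i : Fin r, ∀ h : i.1 + 1 < r, ∀ j < (row ⟨i.1 + 1, h⟩).length,
    (row i).getD j 0 < (row ⟨i.1 + 1, h⟩).getD j 0
  marg_large : ∀ i : Fin r, (row i).count (i.1 + 1) =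
    (if h : i.1 + 1 < r then (row ⟨i.1 + 1, h⟩).length else 0) + 1

/-- `ℓ_{i,x}(T)`: the number of entries with code `x` in row `i` (row `i : Fin r`
has label `i+1`; the symbol `0` has code `r+1` and `k̄` has code `2r+2-k`). -/
def ellB (r : ℕ) (T : TabB r) (i : Fin r) (x : ℕ) : ℕ := (T.row i).count x

/-- `seg′(T)`: the number of pairs `(i,x)` with `x ≻ i` and `ℓ_{i,x}(T) > 0`. -/
def segB' (r : ℕ) (T : TabB r) : ℕ :=
  ∑ i : Fin r, ((Finset.Icc (i.1 + 2) (2 * r + 1)).filter fun x => ellB r T i x ≠ 0).card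

/-- `e_B(T)`: the number of rows `i` containing both a `0`-segment and an
`ī`-segment. -/
def eB (r : ℕ) (T : TabB r) : ℕ :=
  (Finset.univ.filter fun i : Fin r =>
    ellB r T i (r + 1) ≠ 0 ∧ ellB r T i (2 * r + 1 - i.1) ≠ 0).card

/-- `seg(T) = seg′(T) - e_B(T)`. -/
def segB (r : ℕ) (T : TabB r) : ℕ := segB' r T - eB r T

/-- The positive root `β_{i,k} = α_i + ⋯ + α_k` of `B_r` (`1 ≤ i ≤ k ≤ r`), in
simple-root coordinates. -/
def betaB (r : ℕ) (i k : ℕ) : Fin r → ℕ :=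
  fun j => if i ≤ j.1 + 1 ∧ j.1 + 1 ≤ k then 1 else 0

/-- The positive root `γ_{i,k} = α_i + ⋯ + α_{k-1} + 2α_k + ⋯ + 2α_r` of `B_r`
(`1 ≤ i < k ≤ r`), in simple-root coordinates. -/
def gammaB (r : ℕ) (i k : ℕ) : Fin r → ℕ :=
  fun j => if i ≤ j.1 + 1 ∧ j.1 + 1 ≤ k - 1 then 1 else if k ≤ j.1 + 1 then 2 else 0

/-- The set of positive roots of `B_r`. -/
def posRootsB (r : ℕ) : Finset (Fin r → ℕ) :=
  ((Finset.Icc 1 r ×ˢ Finset.Icc 1 r).filter fun p => p.1 ≤ p.2).image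
      (fun p => betaB r p.1 p.2) ∪
    ((Finset.Icc 1 r ×ˢ Finset.Icc 1 r).filter fun p => p.1 < p.2).image
      (fun p => gammaB r p.1 p.2)

/-- `Ξ(T)`, extended by zero to all vectors: `Ξ(T)(β_{i,k-1}) = ℓ_{i,k}(T)` for
`i < k ≤ r`, `Ξ(T)(β_{i,r}) = 2ℓ_{i,ī}(T) + ℓ_{i,0}(T)`, and
`Ξ(T)(γ_{i,k}) = ℓ_{i,k̄}(T)` for `i < k ≤ r`. -/
def XiB (r : ℕ) (T : TabB r) (v : Fin r → ℕ) : ℕ :=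
  ∑ i : Fin r,
    ((∑ k ∈ Finset.Icc (i.1 + 2) r,
        if v = betaB r (i.1 + 1) (k - 1) then ellB r T i k else 0) +
      (if v = betaB r (i.1 + 1) r then
        2 * ellB r T i (2 * r + 1 - i.1) + ellB r T i (r + 1) else 0) +
      (∑ k ∈ Finset.Icc (i.1 + 2) r,
        if v = gammaB r (i.1 + 1) k then ellB r T i (2 * r + 2 - k) else 0))

/-- `-wt(T) = Σ_α Ξ(T)(α)·α`, in simple-root coordinates. -/
def negwtB (r : ℕ) (T : TabB r) : Fin r → ℕ :=
  ∑ v ∈ posRootsB r, XiB r T v • v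

/-- `|T|`: the number of boxes in the reduced form of `T`, counting each
`ī`-box in row `i` with multiplicity `2`. -/
def sizeB (r : ℕ) (T : TabB r) : ℕ :=
  ∑ i : Fin r,
    ((∑ x ∈ Finset.Icc (i.1 + 2) (2 * r + 1), ellB r T i x) +
      ellB r T i (2 * r + 1 - i.1))

section Roots

variable {r : ℕ}

theorem betaB_inj {i k i' k' : ℕ} (hi : 1 ≤ i) (hik : i ≤ k) (hk : k ≤ r)
    (hi' : 1 ≤ i') (hik' : i' ≤ k') (hk' : k' ≤ r) :
    betaB r i k = betaB r i' k' ↔ i = i' ∧ k = k' := by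
  refine ⟨fun h => ?_, by rintro ⟨rfl, rfl⟩; rfl⟩
  have supp (j : ℕ) (hj : j < r) : i ≤ j + 1 ∧ j + 1 ≤ k ↔ i' ≤ j + 1 ∧ j + 1 ≤ k' := by
    have := congrFun h ⟨j, hj⟩
    simp only [betaB] at this
    split_ifs at this <;> tauto
  have := supp (i - 1) (by omega)
  have := supp (i' - 1) (by omega)
  have := supp (k - 1) (by omega)
  have := supp (k' - 1) (by omega)
  omega

theorem gammaB_inj {i k i' k' : ℕ} (hi : 1 ≤ i) (hik : i < k) (hk : k ≤ r)
    (hi' : 1 ≤ i') (hik' : i' < k') (hk' : k' ≤ r) :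
    gammaB r i k = gammaB r i' k' ↔ i = i' ∧ k = k' := by
  refine ⟨fun h => ?_, by rintro ⟨rfl, rfl⟩; rfl⟩
  have supp (j : ℕ) (hj : j < r) : (i ≤ j + 1 ↔ i' ≤ j + 1) ∧ (k ≤ j + 1 ↔ k' ≤ j + 1) := by
    have := congrFun h ⟨j, hj⟩
    simp only [gammaB] at this
    split_ifs at this <;> omega
  have := supp (i - 1) (by omega)
  have := supp (i' - 1) (by omega)
  have := supp (k - 1) (by omega)
  have := supp (k' - 1) (by omega)
  omega

theorem betaB_ne_gammaB (hr : 0 < r) {i k i' k' : ℕ} (hk' : k' ≤ r) :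
    betaB r i k ≠ gammaB r i' k' := by
  intro h
  have := congrFun h ⟨r - 1, by omega⟩
  simp only [betaB, gammaB] at this
  split_ifs at this <;> omega

theorem mem_posRootsB {v : Fin r → ℕ} :
    v ∈ posRootsB r ↔ (∃ i k, 1 ≤ i ∧ i ≤ k ∧ k ≤ r ∧ v = betaB r i k) ∨
      (∃ i k, 1 ≤ i ∧ i < k ∧ k ≤ r ∧ v = gammaB r i k) := by
  simp only [posRootsB, Finset.mem_union, Finset.mem_image, Finset.mem_filter,
    Finset.mem_product, Finset.mem_Icc, Prod.exists]
  constructor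
  · rintro (⟨i, k, h, rfl⟩ | ⟨i, k, h, rfl⟩)
    exacts [.inl ⟨i, k, by omega, by omega, by omega, rfl⟩,
      .inr ⟨i, k, by omega, by omega, by omega, rfl⟩]
  · rintro (⟨i, k, h₁, h₂, h₃, rfl⟩ | ⟨i, k, h₁, h₂, h₃, rfl⟩)
    exacts [.inl ⟨i, k, by omega, rfl⟩, .inr ⟨i, k, by omega, rfl⟩]

theorem betaB_mem_posRootsB {i k : ℕ} (hi : 1 ≤ i) (hik : i ≤ k) (hk : k ≤ r) :
    betaB r i k ∈ posRootsB r :=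
  mem_posRootsB.2 (.inl ⟨i, k, hi, hik, hk, rfl⟩)

theorem gammaB_mem_posRootsB {i k : ℕ} (hi : 1 ≤ i) (hik : i < k) (hk : k ≤ r) :
    gammaB r i k ∈ posRootsB r :=
  mem_posRootsB.2 (.inr ⟨i, k, hi, hik, hk, rfl⟩)

end Roots

namespace TabB

variable {r : ℕ}

theorem pairwise_row (T : TabB r) (i : Fin r) : (T.row i).Pairwise (· ≤ ·) :=
  List.isChain_iff_pairwise.1 (T.row_weak i)

theorem le_of_mem_row (T : TabB r) (i : Fin r) {e : ℕ} (he : e ∈ T.row i) : i.1 + 1 ≤ e := by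
  obtain ⟨l, hl⟩ := List.head?_eq_some_iff.1 (T.first_col i)
  have hsorted := T.pairwise_row i
  rw [hl] at he hsorted
  rcases List.mem_cons.1 he with rfl | he
  exacts [le_rfl, List.rel_of_pairwise_cons hsorted he]

theorem ellB_eq_zero_of_gt (T : TabB r) (i : Fin r) {x : ℕ} (hx : 2 * r + 1 - i.1 < x) :
    ellB r T i x = 0 :=
  List.count_eq_zero.2 fun hmem => by have := T.row_bound i x hmem; omega

theorem eq_of_ellB_eq {T U : TabB r}
    (h : ∀ i : Fin r, ∀ x, i.1 + 2 ≤ x → ellB r T i x = ellB r U i x) : T = U := by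
  have hrow (n : ℕ) : ∀ i : Fin r, r - i.1 ≤ n → T.row i = U.row i := by
    induction n with
    | zero => intro i hi; omega
    | succ n ih =>
      intro i hi
      refine (List.perm_iff_count.2 fun x => ?_).eq_of_pairwise' (T.pairwise_row i)
        (U.pairwise_row i)
      rcases lt_trichotomy x (i.1 + 1) with hx | rfl | hx
      · rw [List.count_eq_zero.2 fun he => by have := T.le_of_mem_row i he; omega,
          List.count_eq_zero.2 fun he => by have := U.le_of_mem_row i he; omega]
      · rw [T.marg_large i, U.marg_large i]
        split_ifs with hnext
        · rw [ih ⟨i.1 + 1, hnext⟩ (by simp only; omega)]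
        · rfl
      · exact h i x hx
  cases T; cases U
  simp only [mk.injEq]
  exact funext fun i => hrow r i (by omega)

end TabB

section XiEval

variable {r : ℕ} (T : TabB r)

theorem XiB_betaB (i : Fin r) {k : ℕ} (hik : i.1 + 1 ≤ k) (hkr : k < r) :
    XiB r T (betaB r (i.1 + 1) k) = ellB r T i (k + 1) := by
  have hr : 0 < r := i.pos
  have hγ (i' : Fin r) : ∀ k' ∈ Finset.Icc (i'.1 + 2) r, (if betaB r (i.1 + 1) k =
      gammaB r (i'.1 + 1) k' then ellB r T i' (2 * r + 2 - k') else 0) = 0 :=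
    fun k' hk' => if_neg (betaB_ne_gammaB hr (Finset.mem_Icc.1 hk').2)
  rw [XiB, Finset.sum_eq_single i]
  · rw [Finset.sum_eq_single_of_mem (k + 1) (Finset.mem_Icc.2 ⟨by omega, hkr⟩),
      if_pos (by rw [Nat.add_sub_cancel]), if_neg, Finset.sum_eq_zero (hγ i), add_zero, add_zero]
    · rw [betaB_inj] <;> omega
    · intro k' hk' hne
      rw [Finset.mem_Icc] at hk'
      exact if_neg (by rw [betaB_inj] <;> omega)
  · intro i' _ hne
    have hne' : i.1 ≠ i'.1 := Fin.val_ne_of_ne hne.symm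
    refine add_eq_zero.2 ⟨add_eq_zero.2 ⟨Finset.sum_eq_zero fun k' hk' => if_neg ?_, if_neg ?_⟩,
      Finset.sum_eq_zero (hγ i')⟩
    · rw [Finset.mem_Icc] at hk'
      rw [betaB_inj] <;> omega
    · rw [betaB_inj] <;> omega
  · simp

theorem XiB_betaB_last (i : Fin r) :
    XiB r T (betaB r (i.1 + 1) r) =
      2 * ellB r T i (2 * r + 1 - i.1) + ellB r T i (r + 1) := by
  have hr : 0 < r := i.pos
  have hβ (i' : Fin r) : ∀ k' ∈ Finset.Icc (i'.1 + 2) r, (if betaB r (i.1 + 1) r =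
      betaB r (i'.1 + 1) (k' - 1) then ellB r T i' k' else 0) = 0 := by
    intro k' hk'
    rw [Finset.mem_Icc] at hk'
    exact if_neg (by rw [betaB_inj] <;> omega)
  have hγ (i' : Fin r) : ∀ k' ∈ Finset.Icc (i'.1 + 2) r, (if betaB r (i.1 + 1) r =
      gammaB r (i'.1 + 1) k' then ellB r T i' (2 * r + 2 - k') else 0) = 0 :=
    fun k' hk' => if_neg (betaB_ne_gammaB hr (Finset.mem_Icc.1 hk').2)
  rw [XiB, Finset.sum_eq_single i]
  · rw [Finset.sum_eq_zero (hβ i), Finset.sum_eq_zero (hγ i), if_pos rfl, zero_add, add_zero]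
  · intro i' _ hne
    have hne' : i.1 ≠ i'.1 := Fin.val_ne_of_ne hne.symm
    rw [Finset.sum_eq_zero (hβ i'), Finset.sum_eq_zero (hγ i'),
      if_neg (by rw [betaB_inj] <;> omega), add_zero, add_zero]
  · simp

theorem XiB_gammaB (i : Fin r) {k : ℕ} (hk : i.1 + 2 ≤ k) (hkr : k ≤ r) :
    XiB r T (gammaB r (i.1 + 1) k) = ellB r T i (2 * r + 2 - k) := by
  have hr : 0 < r := i.pos
  have hβ (i' : Fin r) : ∀ k' ∈ Finset.Icc (i'.1 + 2) r, (if gammaB r (i.1 + 1) k =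
      betaB r (i'.1 + 1) (k' - 1) then ellB r T i' k' else 0) = 0 :=
    fun _ _ => if_neg (betaB_ne_gammaB hr hkr).symm
  have hβr (i' : Fin r) : gammaB r (i.1 + 1) k ≠ betaB r (i'.1 + 1) r :=
    (betaB_ne_gammaB hr hkr).symm
  rw [XiB, Finset.sum_eq_single i]
  · rw [Finset.sum_eq_zero (hβ i), if_neg (hβr i),
      Finset.sum_eq_single_of_mem k (Finset.mem_Icc.2 ⟨hk, hkr⟩), if_pos rfl, zero_add, zero_add]
    intro k' hk' hne
    rw [Finset.mem_Icc] at hk'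
    exact if_neg (by rw [gammaB_inj] <;> omega)
  · intro i' _ hne
    have hne' : i.1 ≠ i'.1 := Fin.val_ne_of_ne hne.symm
    rw [Finset.sum_eq_zero (hβ i'), if_neg (hβr i'), zero_add, zero_add]
    refine Finset.sum_eq_zero fun k' hk' => if_neg ?_
    rw [Finset.mem_Icc] at hk'
    rw [gammaB_inj] <;> omega
  · simp

end XiEval

-- In the encoding of `TabB`, the codes `i+2, …, 2r+1-i` are the letters `k`, `0`, `k̄`
-- (for `i+2 ≤ k ≤ r`) and the bar of `i+1`.
theorem sum_Icc_split_alphabet (f : ℕ → ℕ) {r i : ℕ} (hi : i < r)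
    (hf : ∀ x, 2 * r + 1 - i < x → f x = 0) :
    ∑ x ∈ Finset.Icc (i + 2) (2 * r + 1), f x =
      ∑ k ∈ Finset.Icc (i + 2) r, f k + f (r + 1) +
        ∑ k ∈ Finset.Icc (i + 2) r, f (2 * r + 2 - k) + f (2 * r + 1 - i) := by
  have hbar : ∑ k ∈ Finset.Icc (i + 2) r, f (2 * r + 2 - k) =
      ∑ x ∈ Finset.Ico (r + 2) (2 * r + 1 - i), f x := by
    rw [← Finset.Ico_add_one_right_eq_Icc, Finset.sum_Ico_reflect f _ (by omega),
      show 2 * r + 2 + 1 - (r + 1) = r + 2 by omega,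
      show 2 * r + 2 + 1 - (i + 2) = 2 * r + 1 - i by omega]
  have htop : ∑ x ∈ Finset.Ico (2 * r + 2 - i) (2 * r + 2), f x = 0 :=
    Finset.sum_eq_zero fun x hx => hf x (by rw [Finset.mem_Ico] at hx; omega)
  rw [hbar, ← Finset.Ico_add_one_right_eq_Icc, ← Finset.Ico_add_one_right_eq_Icc,
    ← Finset.sum_Ico_consecutive f (by omega : i + 2 ≤ r + 1) (by omega : r + 1 ≤ 2 * r + 1 + 1),
    Finset.sum_eq_sum_Ico_succ_bot (by omega : r + 1 < 2 * r + 1 + 1),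
    ← Finset.sum_Ico_consecutive f (by omega : r + 1 + 1 ≤ 2 * r + 1 - i)
      (by omega : 2 * r + 1 - i ≤ 2 * r + 1 + 1),
    Finset.sum_eq_sum_Ico_succ_bot (by omega : 2 * r + 1 - i < 2 * r + 1 + 1),
    (by omega : 2 * r + 1 - i + 1 = 2 * r + 2 - i), htop]
  ring

theorem sum_XiB_eq_sizeB {r : ℕ} (T : TabB r) : ∑ v ∈ posRootsB r, XiB r T v = sizeB r T := by
  simp only [XiB, sizeB]
  rw [Finset.sum_comm]
  refine Finset.sum_congr rfl fun i _ => ?_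
  have hi := i.2
  simp only [Finset.sum_add_distrib]
  rw [Finset.sum_comm, Finset.sum_ite_eq', Finset.sum_comm (s := posRootsB r)]
  simp only [Finset.sum_ite_eq']
  rw [if_pos (betaB_mem_posRootsB (by omega) (by omega) le_rfl),
    Finset.sum_congr rfl fun k hk => if_pos (by
      rw [Finset.mem_Icc] at hk; exact betaB_mem_posRootsB (by omega) (by omega) (by omega)),
    Finset.sum_congr rfl fun k hk => if_pos (by
      rw [Finset.mem_Icc] at hk; exact gammaB_mem_posRootsB (by omega) (by omega) (by omega)),
    sum_Icc_split_alphabet _ hi fun x hx => T.ellB_eq_zero_of_gt i hx]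
  ring

namespace TabB

section OfCounts

variable (r : ℕ) (m : ℕ → ℕ → ℕ)

def tailOfCounts (i : ℕ) : Multiset ℕ :=
  ∑ x ∈ Finset.Ico (i + 2) (2 * r + 2 - i), Multiset.replicate (m i x) x

def rowLengthOfCounts (i : ℕ) : ℕ :=
  ∑ j ∈ Finset.Ico i r, (1 + Multiset.card (tailOfCounts r m j))

def rowOfCounts (i : ℕ) : List ℕ :=
  List.replicate (rowLengthOfCounts r m (i + 1) + 1) (i + 1) ++ (tailOfCounts r m i).sort

variable {r m}

theorem count_tailOfCounts (i x : ℕ) : (tailOfCounts r m i).count x =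
    if i + 2 ≤ x ∧ x < 2 * r + 2 - i then m i x else 0 := by
  simp only [tailOfCounts, Multiset.count_sum', Multiset.count_replicate, Finset.sum_ite_eq',
    Finset.mem_Ico]

theorem mem_tailOfCounts {i x : ℕ} (hx : x ∈ tailOfCounts r m i) :
    i + 2 ≤ x ∧ x < 2 * r + 2 - i := by
  rw [← Multiset.count_ne_zero, count_tailOfCounts] at hx
  split_ifs at hx with h
  exacts [h, absurd rfl hx]

theorem count_rowOfCounts (i x : ℕ) : (rowOfCounts r m i).count x =
    (if i + 1 = x then rowLengthOfCounts r m (i + 1) + 1 else 0) +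
      (if i + 2 ≤ x ∧ x < 2 * r + 2 - i then m i x else 0) := by
  rw [rowOfCounts, List.count_append, List.count_replicate, ← Multiset.coe_count,
    Multiset.sort_eq, count_tailOfCounts]
  simp only [beq_iff_eq]

theorem mem_rowOfCounts {i x : ℕ} (hx : x ∈ rowOfCounts r m i) :
    x = i + 1 ∨ (i + 2 ≤ x ∧ x < 2 * r + 2 - i) := by
  rcases List.mem_append.1 hx with hx | hx
  · exact .inl (List.eq_of_mem_replicate hx)
  · exact .inr (mem_tailOfCounts ((Multiset.mem_sort _).1 hx))

theorem pairwise_rowOfCounts (i : ℕ) : (rowOfCounts r m i).Pairwise (· ≤ ·) := by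
  refine List.pairwise_append.2 ⟨List.pairwise_replicate.2 (.inr le_rfl),
    Multiset.pairwise_sort _ _, fun a ha b hb => ?_⟩
  have := mem_tailOfCounts ((Multiset.mem_sort _).1 hb)
  rw [List.eq_of_mem_replicate ha]
  omega

theorem length_rowOfCounts {i : ℕ} (hi : i < r) :
    (rowOfCounts r m i).length = rowLengthOfCounts r m i := by
  simp only [rowOfCounts, List.length_append, List.length_replicate, Multiset.length_sort,
    rowLengthOfCounts, Finset.sum_eq_sum_Ico_succ_bot hi]
  ring

variable (m) in
def ofCounts (hm : ∀ i < r, m i (r + 1) ≤ 1) : TabB r where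
  row i := rowOfCounts r m i
  entry_mem i e he := by rcases mem_rowOfCounts he with h | h <;> omega
  row_weak i := List.isChain_iff_pairwise.2 (pairwise_rowOfCounts i)
  first_col i := by simp [rowOfCounts, List.replicate_succ]
  row_bound i e he := by rcases mem_rowOfCounts he with h | h <;> omega
  zero_once i := by
    have := hm i i.2
    show (rowOfCounts r m i).count (r + 1) ≤ 1
    rw [count_rowOfCounts]
    split_ifs <;> omega
  col_le i h := by
    rw [length_rowOfCounts i.2, length_rowOfCounts h]
    simp only [rowLengthOfCounts, Finset.sum_eq_sum_Ico_succ_bot i.2]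
    omega
  col_strict i h j hj := by
    rw [length_rowOfCounts h] at hj
    have hi : (rowOfCounts r m i).getD j 0 = i.1 + 1 := by
      rw [rowOfCounts, List.getD_append _ _ _ _ (by simp; omega), List.getD_replicate]
      omega
    have hlt : j < (rowOfCounts r m (i.1 + 1)).length := by rw [length_rowOfCounts h]; omega
    have hnext := mem_rowOfCounts (List.getElem_mem hlt)
    show (rowOfCounts r m i).getD j 0 < (rowOfCounts r m (i.1 + 1)).getD j 0
    rw [hi, List.getD_eq_getElem _ _ hlt]
    omega
  marg_large i := by
    show (rowOfCounts r m i).count (i.1 + 1) = _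
    rw [count_rowOfCounts, if_pos rfl, if_neg (by omega), add_zero]
    split_ifs with h
    · rw [length_rowOfCounts h]
    · simp [rowLengthOfCounts, show i.1 + 1 = r by omega]

theorem ellB_ofCounts (hm : ∀ i < r, m i (r + 1) ≤ 1) (i : Fin r) {x : ℕ}
    (hx : i.1 + 2 ≤ x) (hxr : x ≤ 2 * r + 1 - i.1) : ellB r (ofCounts m hm) i x = m i x := by
  show (rowOfCounts r m i).count x = m i x
  rw [count_rowOfCounts, if_neg (by omega), if_pos (by omega), zero_add]

end OfCounts

end TabB

section Bijection

variable {r : ℕ}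

theorem ellB_eq_of_XiB_eq {T U : TabB r} (h : ∀ v ∈ posRootsB r, XiB r T v = XiB r U v)
    (i : Fin r) {x : ℕ} (hx : i.1 + 2 ≤ x) : ellB r T i x = ellB r U i x := by
  have hi := i.2
  rcases le_or_gt x r with hxr | hxr
  · obtain ⟨k, rfl⟩ : ∃ k, x = k + 1 := ⟨x - 1, by omega⟩
    have := h _ (betaB_mem_posRootsB (by omega) (by omega : i.1 + 1 ≤ k) (by omega))
    rwa [XiB_betaB T i (by omega) (by omega), XiB_betaB U i (by omega) (by omega)] at this
  by_cases hx0 : x = r + 1 ∨ x = 2 * r + 1 - i.1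
  · have hlast := h _ (betaB_mem_posRootsB (by omega) (by omega : i.1 + 1 ≤ r) le_rfl)
    rw [XiB_betaB_last, XiB_betaB_last] at hlast
    have hT : ellB r T i (r + 1) ≤ 1 := T.zero_once i
    have hU : ellB r U i (r + 1) ≤ 1 := U.zero_once i
    rcases hx0 with rfl | rfl <;> omega
  rcases le_or_gt x (2 * r + 1 - i.1) with hxi | hxi
  · have := h _ (gammaB_mem_posRootsB (by omega) (by omega : i.1 + 1 < 2 * r + 2 - x) (by omega))
    rwa [XiB_gammaB T i (by omega) (by omega), XiB_gammaB U i (by omega) (by omega),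
      Nat.sub_sub_self (by omega)] at this
  · rw [T.ellB_eq_zero_of_gt i hxi, U.ellB_eq_zero_of_gt i hxi]

theorem exists_XiB_eq (f : (Fin r → ℕ) → ℕ) :
    ∃ T : TabB r, ∀ v ∈ posRootsB r, XiB r T v = f v := by
  let m (i x : ℕ) : ℕ :=
    if x ≤ r then f (betaB r (i + 1) (x - 1))
    else if x = r + 1 then f (betaB r (i + 1) r) % 2
    else if x = 2 * r + 1 - i then f (betaB r (i + 1) r) / 2
    else f (gammaB r (i + 1) (2 * r + 2 - x))
  have hm : ∀ i < r, m i (r + 1) ≤ 1 := fun i hi => by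
    simp only [m]
    split_ifs <;> omega
  refine ⟨TabB.ofCounts m hm, fun v hv => ?_⟩
  rcases mem_posRootsB.1 hv with ⟨i, k, hi, hik, hk, rfl⟩ | ⟨i, k, hi, hik, hk, rfl⟩
  all_goals obtain ⟨i, rfl⟩ : ∃ i', i = i' + 1 := ⟨i - 1, by omega⟩
  · rcases hk.lt_or_eq with hk | rfl
    · rw [XiB_betaB _ ⟨i, by omega⟩ hik hk,
        TabB.ellB_ofCounts _ _ (by simp; omega) (by simp; omega)]
      simp only [m, Nat.add_sub_cancel]
      split_ifs <;> first | rfl | omega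
    · rw [XiB_betaB_last _ ⟨i, by omega⟩, TabB.ellB_ofCounts _ _ (by simp; omega) le_rfl,
        TabB.ellB_ofCounts _ _ (by simp; omega) (by simp; omega)]
      simp only [m]
      split_ifs <;> omega
  · rw [XiB_gammaB _ ⟨i, by omega⟩ hik hk,
      TabB.ellB_ofCounts _ _ (by simp; omega) (by simp; omega)]
    simp only [m, Nat.sub_sub_self (by omega : k ≤ 2 * r + 2)]
    split_ifs <;> first | rfl | omega

noncomputable def xiEquiv (r : ℕ) : TabB r ≃ ({v // v ∈ posRootsB r} → ℕ) :=
  Equiv.ofBijective (fun T α => XiB r T α.1)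
    ⟨fun _ _ h => TabB.eq_of_ellB_eq fun i _ hx =>
      ellB_eq_of_XiB_eq (fun v hv => congrFun h ⟨v, hv⟩) i hx,
    fun c => by
      obtain ⟨T, hT⟩ := exists_XiB_eq fun v => if h : v ∈ posRootsB r then c ⟨v, h⟩ else 0
      exact ⟨T, funext fun α => (hT α.1 α.2).trans (dif_pos α.2)⟩⟩

theorem negwtB_eq_sum_xiEquiv (T : TabB r) :
    negwtB r T = ∑ α : {v // v ∈ posRootsB r}, xiEquiv r T α • α.1 :=
  (Finset.sum_coe_sort _ _).symm

theorem sizeB_eq_sum_xiEquiv (T : TabB r) :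
    sizeB r T = ∑ α : {v // v ∈ posRootsB r}, xiEquiv r T α := by
  rw [← sum_XiB_eq_sizeB]
  exact (Finset.sum_coe_sort _ _).symm

end Bijection

theorem stmt12_general (r : ℕ) :
    ∀ μ : Fin r → ℕ, ∀ d : ℕ,
      Nat.card {c : {v // v ∈ posRootsB r} → ℕ //
          (∑ α : {v // v ∈ posRootsB r}, c α • α.1) = μ ∧
          (∑ α : {v // v ∈ posRootsB r}, c α) = d}
      = Nat.card {T : TabB r // negwtB r T = μ ∧ sizeB r T = d} := by
  intro μ d
  refine (Nat.card_congr ((xiEquiv r).subtypeEquiv fun T => ?_)).symm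
  rw [negwtB_eq_sum_xiEquiv, sizeB_eq_sum_xiEquiv]

/-- for every `μ` in the positive root lattice of `B_r`,
Lusztig's `q`-analogue of the Kostant partition function satisfies
`𝒫(μ;q) = Σ_{T ∈ 𝒯(∞), -wt(T) = μ} q^{|T|}`, stated coefficientwise in `q`. -/
theorem stmt12 (r : ℕ) (hr : 2 ≤ r) :
    ∀ μ : Fin r → ℕ, ∀ d : ℕ,
      Nat.card {c : {v // v ∈ posRootsB r} → ℕ //
          (∑ α : {v // v ∈ posRootsB r}, c α • α.1) = μ ∧
          (∑ α : {v // v ∈ posRootsB r}, c α) = d}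
      = Nat.card {T : TabB r // negwtB r T = μ ∧ sizeB r T = d} :=
  stmt12_general r
end

section
/- For every μ in the positive root lattice of D_r, Lusztig's q-analogue of the Kostant partition function satisfies 𝒫(μ;q) = Σ_{T ∈ 𝒯(∞), −wt(T) = μ} q^{|T|} as polynomials in q (both sums are finite). -/
/-- The strict order on the type `D_r` alphabet
`{1 ≺ ⋯ ≺ r-1 ≺ r, r̄ ≺ \overline{r-1} ≺ ⋯ ≺ 1̄}`, encoded in `{1, …, 2r} ⊂ ℕ`
by `k ↦ k` for `k ≤ r`, `r̄ ↦ r+1`, and `k̄ ↦ 2r+1-k` for `k ≤ r-1`; the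
symbols `r` and `r̄` (codes `r` and `r+1`) are incomparable. -/
def dltD (r : ℕ) (a b : ℕ) : Prop := a < b ∧ ¬(a = r ∧ b = r + 1)

/-- The weak order on the type `D_r` alphabet. -/
def dleD (r : ℕ) (a b : ℕ) : Prop := a = b ∨ dltD r a b

/-- Marginally large semistandard Young tableaux of type `D_r`, on the
partially ordered alphabet above. Conditions: exactly `r-1` rows, rows weakly
increasing, columns strictly increasing, first column `1, …, r-1`, every entry
of row `i` is `≼ ī`, the symbols `r` and `r̄` never appear in the same row, and
the number of `i`-entries in row `i` exceeds the number of boxes in row `i+1`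
by exactly one. -/
structure TabD (r : ℕ) where
  row : Fin (r - 1) → List ℕ
  entry_mem : ∀ i : Fin (r - 1), ∀ e ∈ row i, 1 ≤ e ∧ e ≤ 2 * r
  row_weak : ∀ i : Fin (r - 1), (row i).Chain' (dleD r)
  first_col : ∀ i : Fin (r - 1), (row i).head? = some (i.1 + 1)
  row_bound : ∀ i : Fin (r - 1), ∀ e ∈ row i, dleD r e (2 * r - i.1)
  not_both : ∀ i : Fin (r - 1), ¬(r ∈ row i ∧ (r + 1) ∈ row i)
  col_le : ∀ i : Fin (r - 1), ∀ h : i.1 + 1 < r - 1,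
    (row ⟨i.1 + 1, h⟩).length ≤ (row i).length
  col_strict : ∀ i : Fin (r - 1), ∀ h : i.1 + 1 < r - 1,
    ∀ j < (row ⟨i.1 + 1, h⟩).length,
      dltD r ((row i).getD j 0) ((row ⟨i.1 + 1, h⟩).getD j 0)
  marg_large : ∀ i : Fin (r - 1), (row i).count (i.1 + 1) =
    (if h : i.1 + 1 < r - 1 then (row ⟨i.1 + 1, h⟩).length else 0) + 1

/-- `ℓ_{i,x}(T)`: the number of entries with code `x` in row `i` (row
`i : Fin (r-1)` has label `i+1`; `r̄` has code `r+1` and `k̄` has code `2r+1-k`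
for `k ≤ r-1`). -/
def ellD (r : ℕ) (T : TabD r) (i : Fin (r - 1)) (x : ℕ) : ℕ := (T.row i).count x

/-- `seg′(T)`: the number of pairs `(i,x)` with `x ≻ i` and `ℓ_{i,x}(T) > 0`. -/
def segD' (r : ℕ) (T : TabD r) : ℕ :=
  ∑ i : Fin (r - 1),
    ((Finset.Icc (i.1 + 2) (2 * r)).filter fun x => ellD r T i x ≠ 0).card

/-- `e_D(T)`: the number of rows `i` containing an `ī`-segment but neither an
`r`- nor an `r̄`-segment. -/
def eD (r : ℕ) (T : TabD r) : ℕ :=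
  (Finset.univ.filter fun i : Fin (r - 1) =>
    ellD r T i (2 * r - i.1) ≠ 0 ∧ ellD r T i r = 0 ∧ ellD r T i (r + 1) = 0).card

/-- `seg(T) = seg′(T) + e_D(T)`. -/
def segD (r : ℕ) (T : TabD r) : ℕ := segD' r T + eD r T

/-- The positive root `β_{i,k} = α_i + ⋯ + α_k` of `D_r` (`1 ≤ i ≤ k ≤ r-1`),
in simple-root coordinates. -/
def betaD (r : ℕ) (i k : ℕ) : Fin r → ℕ :=
  fun j => if i ≤ j.1 + 1 ∧ j.1 + 1 ≤ k then 1 else 0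

/-- The positive root `β_{i,r} = α_i + ⋯ + α_{r-2} + α_r` of `D_r`
(`1 ≤ i ≤ r-1`), in simple-root coordinates. -/
def betaDr (r : ℕ) (i : ℕ) : Fin r → ℕ :=
  fun j => if i ≤ j.1 + 1 ∧ j.1 + 1 ≤ r - 2 then 1 else if j.1 + 1 = r then 1 else 0

/-- The positive root
`γ_{i,k} = α_i + ⋯ + α_{r-1} + α_r + α_{r-2} + ⋯ + α_k` of `D_r`
(`1 ≤ i < k ≤ r-1`), in simple-root coordinates. -/
def gammaD (r : ℕ) (i k : ℕ) : Fin r → ℕ :=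
  fun j => if i ≤ j.1 + 1 ∧ j.1 + 1 ≤ k - 1 then 1
    else if k ≤ j.1 + 1 ∧ j.1 + 1 ≤ r - 2 then 2
    else if j.1 + 1 = r - 1 ∨ j.1 + 1 = r then 1 else 0

/-- The set of positive roots of `D_r`. -/
def posRootsD (r : ℕ) : Finset (Fin r → ℕ) :=
  ((Finset.Icc 1 (r - 1) ×ˢ Finset.Icc 1 (r - 1)).filter fun p => p.1 ≤ p.2).image
      (fun p => betaD r p.1 p.2) ∪
    (Finset.Icc 1 (r - 1)).image (fun i => betaDr r i) ∪
    ((Finset.Icc 1 (r - 1) ×ˢ Finset.Icc 1 (r - 1)).filter fun p => p.1 < p.2).image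
      (fun p => gammaD r p.1 p.2)

/-- `Ξ(T)`, extended by zero to all vectors: `Ξ(T)(β_{i,k-1}) = ℓ_{i,k}(T)` for
`i < k ≤ r-1`, `Ξ(T)(β_{i,r-1}) = ℓ_{i,r}(T) + ℓ_{i,ī}(T)`,
`Ξ(T)(β_{i,r}) = ℓ_{i,r̄}(T) + ℓ_{i,ī}(T)`, and `Ξ(T)(γ_{i,k}) = ℓ_{i,k̄}(T)`
for `i < k ≤ r-1`. -/
def XiD (r : ℕ) (T : TabD r) (v : Fin r → ℕ) : ℕ :=
  ∑ i : Fin (r - 1),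
    ((∑ k ∈ Finset.Icc (i.1 + 2) (r - 1),
        if v = betaD r (i.1 + 1) (k - 1) then ellD r T i k else 0) +
      (if v = betaD r (i.1 + 1) (r - 1) then
        ellD r T i r + ellD r T i (2 * r - i.1) else 0) +
      (if v = betaDr r (i.1 + 1) then
        ellD r T i (r + 1) + ellD r T i (2 * r - i.1) else 0) +
      (∑ k ∈ Finset.Icc (i.1 + 2) (r - 1),
        if v = gammaD r (i.1 + 1) k then ellD r T i (2 * r + 1 - k) else 0))

/-- `-wt(T) = Σ_α Ξ(T)(α)·α`, in simple-root coordinates. -/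
def negwtD (r : ℕ) (T : TabD r) : Fin r → ℕ :=
  ∑ v ∈ posRootsD r, XiD r T v • v

/-- `|T|`: the number of boxes in the reduced form of `T`, counting each
`ī`-box in row `i` with multiplicity `2`. -/
def sizeD (r : ℕ) (T : TabD r) : ℕ :=
  ∑ i : Fin (r - 1),
    ((∑ x ∈ Finset.Icc (i.1 + 2) (2 * r), ellD r T i x) +
      ellD r T i (2 * r - i.1))

/-!
A marginally large tableau is determined by the numbers `ℓ_{i,x}(T)`, `x ≻ i`, and every family
of such numbers with `ℓ_{i,r} ℓ_{i,r̄} = 0` occurs: the rows can be filled in from the bottom,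
the number of `i`-entries of row `i` being forced by the length of row `i + 1`. The positive roots
correspond to the pairs `(i, x)` with `i ≺ x ≺ ī`, and along this correspondence `Ξ(T)` is `ℓ(T)`,
except that an `ī`-entry of row `i` counts towards both `β_{i,r-1}` and `β_{i,r}`. Conversely, the
minimum of the coefficients at these two roots recovers `ℓ_{i,ī}`, so `Ξ` is a bijection from
`𝒯(∞)` onto Kostant partitions. It carries `-wt` to `Σ_α c(α) α` by definition, and `|T|` to
`Σ_α c(α)` because `ī`-boxes are counted twice.
-/

def blockList (f : ℕ → ℕ) (s t : ℕ) : List ℕ :=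
  (List.range' s (t - s)).flatMap fun x => List.replicate (f x) x

theorem count_blockList (f : ℕ → ℕ) (s t x : ℕ) :
    (blockList f s t).count x = if s ≤ x ∧ x < t then f x else 0 := by
  rw [blockList, List.count_flatMap, ← List.sum_toFinset _ List.nodup_range']
  simp only [Function.comp_apply, List.count_replicate, beq_iff_eq]
  rw [Finset.sum_ite_eq']
  simp only [List.mem_toFinset, List.mem_range'_1]
  grind

theorem mem_blockList {f : ℕ → ℕ} {s t x : ℕ} :
    x ∈ blockList f s t ↔ s ≤ x ∧ x < t ∧ f x ≠ 0 := by
  rw [← List.count_pos_iff, count_blockList]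
  grind

theorem pairwise_blockList {R : ℕ → ℕ → Prop} {f : ℕ → ℕ} (s t : ℕ) (hrefl : ∀ x, R x x)
    (hR : ∀ x y, x < y → f x ≠ 0 → f y ≠ 0 → R x y) : (blockList f s t).Pairwise R := by
  refine List.pairwise_flatMap.2 ⟨fun x _ => List.pairwise_replicate.2 (Or.inr (hrefl x)),
    (List.pairwise_lt_range' ..).imp fun {x y} hxy a ha b hb => ?_⟩
  obtain ⟨hfx, rfl⟩ := List.mem_replicate.1 ha
  obtain ⟨hfy, rfl⟩ := List.mem_replicate.1 hb
  exact hR a b hxy hfx hfy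

theorem dleD_le {r a b : ℕ} (h : dleD r a b) : a ≤ b := by
  rcases h with h | ⟨h, _⟩ <;> omega

namespace TabD

variable {r : ℕ}

theorem pairwise_le_row (T : TabD r) (i : Fin (r - 1)) : (T.row i).Pairwise (· ≤ ·) :=
  List.isChain_iff_pairwise.1 ((T.row_weak i).imp fun _ _ => dleD_le)

theorem le_of_mem_row (T : TabD r) (i : Fin (r - 1)) {e : ℕ} (he : e ∈ T.row i) :
    i.1 + 1 ≤ e := by
  have hhead := T.first_col i
  have hsorted := T.pairwise_le_row i
  cases hrow : T.row i with
  | nil => simp [hrow] at hhead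
  | cons a t =>
    rw [hrow, List.head?_cons, Option.some_inj] at hhead
    rw [hrow] at he hsorted
    rcases List.mem_cons.1 he with rfl | he
    · exact hhead.ge
    · exact hhead ▸ List.rel_of_pairwise_cons hsorted he

theorem ellD_eq_zero_of_lt (T : TabD r) (i : Fin (r - 1)) {x : ℕ} (hx : x < i.1 + 1) :
    ellD r T i x = 0 :=
  List.count_eq_zero.2 fun hmem => by have := T.le_of_mem_row i hmem; omega

theorem ellD_eq_zero_of_gt (T : TabD r) (i : Fin (r - 1)) {x : ℕ} (hx : 2 * r - i.1 < x) :
    ellD r T i x = 0 :=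
  List.count_eq_zero.2 fun hmem => by have := dleD_le (T.row_bound i x hmem); omega

theorem ellD_self (T : TabD r) (i : Fin (r - 1)) :
    ellD r T i (i.1 + 1) =
      (if h : i.1 + 1 < r - 1 then (T.row ⟨i.1 + 1, h⟩).length else 0) + 1 :=
  T.marg_large i

/-- The number of `i`-entries of row `i` is forced by the length of row `i + 1`, so rows can be
compared from the bottom up. -/
theorem ext_of_ellD {T T' : TabD r}
    (h : ∀ i x, i.1 + 2 ≤ x → ellD r T i x = ellD r T' i x) : T = T' := by
  have hrow : ∀ i, T.row i = T'.row i := fun i => by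
    induction i using WellFoundedGT.induction with
    | _ i ih =>
      refine List.Perm.eq_of_pairwise' (T.pairwise_le_row i) (T'.pairwise_le_row i)
        (List.perm_iff_count.2 fun x => ?_)
      change ellD r T i x = ellD r T' i x
      rcases lt_trichotomy x (i.1 + 1) with hx | rfl | hx
      · rw [T.ellD_eq_zero_of_lt i hx, T'.ellD_eq_zero_of_lt i hx]
      · rw [T.ellD_self, T'.ellD_self]
        split_ifs with hi
        · rw [ih _ (Fin.lt_def.2 (Nat.lt_succ_self _))]
        · rfl
      · exact h i x hx
  cases T
  cases T'
  simp only [mk.injEq]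
  exact funext hrow

end TabD

section Roots

variable {r : ℕ}

theorem betaD_injective {a b a' b' : ℕ} (ha : 1 ≤ a) (hab : a ≤ b) (hb : b ≤ r - 1)
    (ha' : 1 ≤ a') (hab' : a' ≤ b') (hb' : b' ≤ r - 1)
    (h : betaD r a b = betaD r a' b') : a = a' ∧ b = b' := by
  have key : ∀ m < r, (a ≤ m + 1 ∧ m + 1 ≤ b ↔ a' ≤ m + 1 ∧ m + 1 ≤ b') := fun m hm => by
    have := congrFun h ⟨m, hm⟩
    simp only [betaD] at this
    split_ifs at this <;> omega
  have := key (a - 1) (by omega)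
  have := key (a' - 1) (by omega)
  have := key (b - 1) (by omega)
  have := key (b' - 1) (by omega)
  omega

theorem betaDr_injective {a a' : ℕ} (ha : 1 ≤ a) (har : a ≤ r - 1) (ha' : 1 ≤ a')
    (har' : a' ≤ r - 1) (h : betaDr r a = betaDr r a') : a = a' := by
  have key : ∀ m < r, (a ≤ m + 1 ∧ m + 1 ≤ r - 2 ∨ m + 1 = r ↔
      a' ≤ m + 1 ∧ m + 1 ≤ r - 2 ∨ m + 1 = r) := fun m hm => by
    have := congrFun h ⟨m, hm⟩
    simp only [betaDr] at this
    split_ifs at this <;> omega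
  have := key (a - 1) (by omega)
  have := key (a' - 1) (by omega)
  omega

theorem gammaD_injective {a k a' k' : ℕ} (ha : 1 ≤ a) (hak : a < k) (hk : k ≤ r - 1)
    (ha' : 1 ≤ a') (hak' : a' < k') (hk' : k' ≤ r - 1)
    (h : gammaD r a k = gammaD r a' k') : a = a' ∧ k = k' := by
  have key : ∀ m < r,
      ((a ≤ m + 1 ∧ m + 1 ≤ k - 1 ∨ m + 1 = r - 1 ∨ m + 1 = r) ↔
        (a' ≤ m + 1 ∧ m + 1 ≤ k' - 1 ∨ m + 1 = r - 1 ∨ m + 1 = r)) ∧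
      (k ≤ m + 1 ∧ m + 1 ≤ r - 2 ↔ k' ≤ m + 1 ∧ m + 1 ≤ r - 2) := fun m hm => by
    have := congrFun h ⟨m, hm⟩
    simp only [gammaD] at this
    split_ifs at this <;> omega
  have := (key (a - 1) (by omega)).1
  have := (key (a' - 1) (by omega)).1
  have := (key (k - 1) (by omega)).2
  have := (key (k' - 1) (by omega)).2
  omega

theorem betaD_ne_betaDr (hr : 0 < r) {a b a' : ℕ} (hb : b ≤ r - 1) :
    betaD r a b ≠ betaDr r a' := fun h => by
  have := congrFun h ⟨r - 1, by omega⟩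
  simp only [betaD, betaDr] at this
  split_ifs at this <;> omega

theorem betaD_ne_gammaD (hr : 0 < r) {a b a' k' : ℕ} (hb : b ≤ r - 1) :
    betaD r a b ≠ gammaD r a' k' := fun h => by
  have := congrFun h ⟨r - 1, by omega⟩
  simp only [betaD, gammaD] at this
  split_ifs at this <;> omega

theorem betaDr_ne_gammaD (hr : 2 ≤ r) {a a' k' : ℕ} (hk' : k' ≤ r - 1) :
    betaDr r a ≠ gammaD r a' k' := fun h => by
  have := congrFun h ⟨r - 2, by omega⟩
  simp only [betaDr, gammaD] at this
  split_ifs at this <;> omega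

/-- The positive root `Ξ` attaches to the letter with code `x` in row `i` (rows counted from `0`):
codes `x ≤ r` give `β_{i+1,x-1}`, the code `r + 1` of `r̄` gives `β_{i+1,r}`, and the code
`2r + 1 - k` of `k̄` gives `γ_{i+1,k}`. -/
def rootD (r i x : ℕ) : Fin r → ℕ :=
  if x ≤ r then betaD r (i + 1) (x - 1)
  else if x = r + 1 then betaDr r (i + 1)
  else gammaD r (i + 1) (2 * r + 1 - x)

theorem rootD_mem {i x : ℕ} (hi : i < r - 1) (hx : x ∈ Finset.Ico (i + 2) (2 * r - i)) :
    rootD r i x ∈ posRootsD r := by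
  rw [Finset.mem_Ico] at hx
  simp only [rootD, posRootsD, Finset.mem_union, Finset.mem_image, Finset.mem_filter,
    Finset.mem_product, Finset.mem_Icc, Prod.exists]
  split_ifs with h1 h2
  · exact Or.inl (Or.inl ⟨i + 1, x - 1, by omega, rfl⟩)
  · exact Or.inl (Or.inr ⟨i + 1, by omega, rfl⟩)
  · exact Or.inr ⟨i + 1, 2 * r + 1 - x, by omega, rfl⟩

theorem exists_rootD_eq {v : Fin r → ℕ} (hv : v ∈ posRootsD r) :
    ∃ i : Fin (r - 1), ∃ x ∈ Finset.Ico (i.1 + 2) (2 * r - i.1), rootD r i x = v := by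
  simp only [posRootsD, Finset.mem_union, Finset.mem_image, Finset.mem_filter,
    Finset.mem_product, Finset.mem_Icc, Prod.exists] at hv
  rcases hv with (⟨a, b, hab, rfl⟩ | ⟨a, ha, rfl⟩) | ⟨a, k, hak, rfl⟩
  · refine ⟨⟨a - 1, by omega⟩, b + 1, Finset.mem_Ico.2 (by simp only; omega), ?_⟩
    simp only [rootD, if_pos (show b + 1 ≤ r by omega), Nat.add_sub_cancel,
      Nat.sub_add_cancel hab.1.1.1]
  · refine ⟨⟨a - 1, by omega⟩, r + 1, Finset.mem_Ico.2 (by simp only; omega), ?_⟩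
    simp only [rootD, if_neg (show ¬r + 1 ≤ r by omega), if_true, Nat.sub_add_cancel ha.1]
  · refine ⟨⟨a - 1, by omega⟩, 2 * r + 1 - k, Finset.mem_Ico.2 (by simp only; omega), ?_⟩
    simp only [rootD, if_neg (show ¬2 * r + 1 - k ≤ r by omega),
      if_neg (show 2 * r + 1 - k ≠ r + 1 by omega), Nat.sub_add_cancel hak.1.1.1,
      show 2 * r + 1 - (2 * r + 1 - k) = k by omega]

theorem eq_of_rootD_eq {i x i' x' : ℕ} (hi : i < r - 1)
    (hx : x ∈ Finset.Ico (i + 2) (2 * r - i)) (hi' : i' < r - 1)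
    (hx' : x' ∈ Finset.Ico (i' + 2) (2 * r - i')) (h : rootD r i x = rootD r i' x') :
    i = i' ∧ x = x' := by
  rw [Finset.mem_Ico] at hx hx'
  unfold rootD at h
  split_ifs at h
  all_goals first
    | have := betaD_injective (by omega) (by omega) (by omega) (by omega) (by omega) (by omega) h
    | have := betaDr_injective (by omega) (by omega) (by omega) (by omega) h
    | have := gammaD_injective (by omega) (by omega) (by omega) (by omega) (by omega) (by omega) h
    | exact absurd h (betaD_ne_betaDr (by omega) (by omega))
    | exact absurd h.symm (betaD_ne_betaDr (by omega) (by omega))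
    | exact absurd h (betaD_ne_gammaD (by omega) (by omega))
    | exact absurd h.symm (betaD_ne_gammaD (by omega) (by omega))
    | exact absurd h (betaDr_ne_gammaD (by omega) (by omega))
    | exact absurd h.symm (betaDr_ne_gammaD (by omega) (by omega))
  all_goals omega

end Roots

section Xi

variable {r : ℕ}

/-- Turns `ℓ`-data into the coefficients of `Ξ` along `rootD`: an `ī`-entry of row `i` counts
both towards `β_{i,r-1}` (code `r`) and towards `β_{i,r}` (code `r + 1`). -/
def mergeIbar (r : ℕ) (ℓ : Fin (r - 1) → ℕ → ℕ) (i : Fin (r - 1)) (x : ℕ) : ℕ :=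
  ℓ i x + if x = r ∨ x = r + 1 then ℓ i (2 * r - i.1) else 0

theorem XiD_eq_sum_rootD (T : TabD r) (v : Fin r → ℕ) :
    XiD r T v = ∑ i : Fin (r - 1), ∑ x ∈ Finset.Ico (i.1 + 2) (2 * r - i.1),
      if v = rootD r i.1 x then mergeIbar r (ellD r T) i x else 0 := by
  refine Finset.sum_congr rfl fun i _ => ?_
  have hi := i.2
  set g := fun x => if v = rootD r i.1 x then mergeIbar r (ellD r T) i x else 0
  have hlow : ∑ k ∈ Finset.Icc (i.1 + 2) (r - 1),
      (if v = betaD r (i.1 + 1) (k - 1) then ellD r T i k else 0) =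
        ∑ x ∈ Finset.Ico (i.1 + 2) r, g x := by
    rw [← Finset.Ico_add_one_right_eq_Icc, Nat.sub_add_cancel (by omega)]
    refine Finset.sum_congr rfl fun x hx => ?_
    rw [Finset.mem_Ico] at hx
    simp only [g, mergeIbar, rootD, if_pos (show x ≤ r by omega),
      if_neg (show ¬(x = r ∨ x = r + 1) by omega), add_zero]
  have hg_r : g r = if v = betaD r (i.1 + 1) (r - 1) then
      ellD r T i r + ellD r T i (2 * r - i.1) else 0 := by
    simp only [g, mergeIbar, rootD, le_refl, if_true, true_or]
  have hg_rbar : g (r + 1) = if v = betaDr r (i.1 + 1) then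
      ellD r T i (r + 1) + ellD r T i (2 * r - i.1) else 0 := by
    simp only [g, mergeIbar, rootD, if_neg (show ¬r + 1 ≤ r by omega), if_true, or_true]
  have hhigh : ∑ k ∈ Finset.Icc (i.1 + 2) (r - 1),
      (if v = gammaD r (i.1 + 1) k then ellD r T i (2 * r + 1 - k) else 0) =
        ∑ x ∈ Finset.Ico (r + 2) (2 * r - i.1), g x := by
    refine Finset.sum_nbij' (fun k => 2 * r + 1 - k) (fun x => 2 * r + 1 - x) ?_ ?_ ?_ ?_ ?_
    all_goals intro k hk; simp only [Finset.mem_Icc, Finset.mem_Ico] at hk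
    · simp only [Finset.mem_Ico]; omega
    · simp only [Finset.mem_Icc]; omega
    · omega
    · omega
    · simp only [g, mergeIbar, rootD, if_neg (show ¬2 * r + 1 - k ≤ r by omega),
        if_neg (show 2 * r + 1 - k ≠ r + 1 by omega),
        if_neg (show ¬(2 * r + 1 - k = r ∨ 2 * r + 1 - k = r + 1) by omega), add_zero,
        show 2 * r + 1 - (2 * r + 1 - k) = k by omega]
  rw [hlow, hhigh, ← hg_r, ← hg_rbar, ← Finset.sum_Ico_consecutive g (by omega : i.1 + 2 ≤ r)
    (by omega : r ≤ 2 * r - i.1), ← Finset.sum_Ico_consecutive g (by omega : r ≤ r + 2)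
    (by omega : r + 2 ≤ 2 * r - i.1), Finset.sum_Ico_succ_top (by omega : r ≤ r + 1),
    Finset.sum_Ico_succ_top le_rfl, Finset.Ico_self, Finset.sum_empty]
  ring

theorem XiD_rootD (T : TabD r) (i : Fin (r - 1)) {x : ℕ}
    (hx : x ∈ Finset.Ico (i.1 + 2) (2 * r - i.1)) :
    XiD r T (rootD r i x) = mergeIbar r (ellD r T) i x := by
  rw [XiD_eq_sum_rootD, Finset.sum_eq_single_of_mem i (Finset.mem_univ _),
    Finset.sum_eq_single_of_mem x hx, if_pos rfl]
  · exact fun y hy hyx => if_neg fun h => hyx (eq_of_rootD_eq i.2 hx i.2 hy h).2.symm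
  · exact fun j _ hji => Finset.sum_eq_zero fun y hy =>
      if_neg fun h => hji (Fin.ext (eq_of_rootD_eq i.2 hx j.2 hy h).1.symm)

theorem sum_mergeIbar_ellD (T : TabD r) (i : Fin (r - 1)) :
    ∑ x ∈ Finset.Ico (i.1 + 2) (2 * r - i.1), mergeIbar r (ellD r T) i x =
      (∑ x ∈ Finset.Icc (i.1 + 2) (2 * r), ellD r T i x) + ellD r T i (2 * r - i.1) := by
  have hi := i.2
  have hfilter : (Finset.Ico (i.1 + 2) (2 * r - i.1)).filter (fun x => x = r ∨ x = r + 1) =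
      {r, r + 1} := by
    ext x
    simp only [Finset.mem_filter, Finset.mem_Ico, Finset.mem_insert, Finset.mem_singleton]
    omega
  have hbar : ∑ x ∈ Finset.Icc (i.1 + 2) (2 * r), ellD r T i x =
      (∑ x ∈ Finset.Ico (i.1 + 2) (2 * r - i.1), ellD r T i x) + ellD r T i (2 * r - i.1) := by
    have htop : ∑ x ∈ Finset.Ico (2 * r - i.1) (2 * r + 1), ellD r T i x =
        ellD r T i (2 * r - i.1) := by
      refine Finset.sum_eq_single_of_mem _ (by simp only [Finset.mem_Ico]; omega) fun x hx hne => ?_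
      exact T.ellD_eq_zero_of_gt i (by simp only [Finset.mem_Ico] at hx; omega)
    rw [← Finset.Ico_add_one_right_eq_Icc, ← htop,
      Finset.sum_Ico_consecutive _ (by omega : i.1 + 2 ≤ 2 * r - i.1) (by omega)]
  simp only [mergeIbar]
  rw [Finset.sum_add_distrib, Finset.sum_ite, Finset.sum_const_zero, Finset.sum_const, hfilter,
    Finset.card_pair (by omega), hbar, smul_eq_mul]
  ring

theorem sum_XiD (T : TabD r) : ∑ v ∈ posRootsD r, XiD r T v = sizeD r T := by
  simp only [XiD_eq_sum_rootD]
  rw [Finset.sum_comm]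
  refine Finset.sum_congr rfl fun i _ => ?_
  rw [Finset.sum_comm, ← sum_mergeIbar_ellD]
  exact Finset.sum_congr rfl fun x hx => by rw [Finset.sum_ite_eq', if_pos (rootD_mem i.2 hx)]

end Xi

section Construction

variable {r : ℕ} (ℓ : Fin (r - 1) → ℕ → ℕ)

def segTail (i : Fin (r - 1)) : List ℕ :=
  blockList (ℓ i) (i.1 + 2) (2 * r - i.1 + 1)

/-- Row `i` of the marginally large tableau with prescribed `ℓ_{i,x}` (`x ≻ i`): it has one more
`i`-entry than row `i + 1` has boxes, hence length `∑_{j ≥ i} (|segTail ℓ j| + 1)`. -/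
def segRow (i : Fin (r - 1)) : List ℕ :=
  List.replicate (∑ j ∈ Finset.Ioi i, ((segTail ℓ j).length + 1) + 1) (i.1 + 1) ++ segTail ℓ i

theorem length_segRow (i : Fin (r - 1)) :
    (segRow ℓ i).length = ∑ j ∈ Finset.Ici i, ((segTail ℓ j).length + 1) := by
  rw [segRow, List.length_append, List.length_replicate, Finset.Ici_eq_cons_Ioi,
    Finset.sum_cons]
  ring

theorem sum_Ioi_segTail (i : Fin (r - 1)) :
    ∑ j ∈ Finset.Ioi i, ((segTail ℓ j).length + 1) =
      if h : i.1 + 1 < r - 1 then (segRow ℓ ⟨i.1 + 1, h⟩).length else 0 := by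
  split_ifs with h
  · rw [length_segRow]
    congr 1
    ext j
    simp only [Finset.mem_Ioi, Finset.mem_Ici, Fin.lt_def, Fin.le_def]
    omega
  · have hempty : Finset.Ioi i = ∅ := by
      ext j
      simp only [Finset.mem_Ioi, Fin.lt_def, Finset.notMem_empty, iff_false]
      omega
    rw [hempty, Finset.sum_empty]

theorem count_segRow_self (i : Fin (r - 1)) :
    (segRow ℓ i).count (i.1 + 1) =
      (if h : i.1 + 1 < r - 1 then (segRow ℓ ⟨i.1 + 1, h⟩).length else 0) + 1 := by
  rw [segRow, List.count_append, List.count_replicate_self, segTail, count_blockList,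
    if_neg (by omega), add_zero, sum_Ioi_segTail]

theorem count_segRow_of_ge (i : Fin (r - 1)) {x : ℕ} (hx : i.1 + 2 ≤ x) :
    (segRow ℓ i).count x = if x ≤ 2 * r - i.1 then ℓ i x else 0 := by
  rw [segRow, List.count_append, List.count_replicate, if_neg (by simp; omega), segTail,
    count_blockList]
  grind

theorem mem_segRow {i : Fin (r - 1)} {e : ℕ} (he : e ∈ segRow ℓ i) :
    e = i.1 + 1 ∨ i.1 + 2 ≤ e ∧ e ≤ 2 * r - i.1 ∧ ℓ i e ≠ 0 := by
  rcases List.mem_append.1 he with he | he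
  · exact Or.inl (List.eq_of_mem_replicate he)
  · have := mem_blockList.1 he
    omega

def ofSegments (hℓ : ∀ i, ℓ i r = 0 ∨ ℓ i (r + 1) = 0) : TabD r where
  row := segRow ℓ
  entry_mem i e he := by
    have := i.2
    rcases mem_segRow ℓ he with rfl | he <;> omega
  row_weak i := by
    refine List.Pairwise.isChain (List.pairwise_append.2 ⟨?_, ?_, ?_⟩)
    · exact List.pairwise_replicate.2 (Or.inr (Or.inl rfl))
    · refine pairwise_blockList _ _ (fun x => Or.inl rfl) fun x y hxy hx hy => ?_
      refine Or.inr ⟨hxy, ?_⟩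
      rintro ⟨rfl, rfl⟩
      exact (hℓ i).elim hx hy
    · intro a ha b hb
      rw [List.eq_of_mem_replicate ha]
      have := (mem_blockList.1 hb).1
      exact Or.inr ⟨by omega, by omega⟩
  first_col i := by
    simp only [segRow, List.replicate_succ, List.cons_append, List.head?_cons]
  row_bound i e he := by
    have := i.2
    rcases mem_segRow ℓ he with rfl | he
    · exact Or.inr ⟨by omega, by omega⟩
    · rcases he.2.1.eq_or_lt with heq | hlt
      · exact Or.inl heq
      · exact Or.inr ⟨hlt, by omega⟩
  not_both i := by
    rintro ⟨hmem_r, hmem_rbar⟩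
    have := i.2
    have hpos : ∀ x, i.1 + 1 < x → x ∈ segRow ℓ i → ℓ i x ≠ 0 := fun x hx hmem => by
      rcases mem_segRow ℓ hmem with rfl | h
      · omega
      · exact h.2.2
    exact (hℓ i).elim (hpos r (by omega) hmem_r) (hpos (r + 1) (by omega) hmem_rbar)
  col_le i h := by
    simp only [length_segRow]
    exact Finset.sum_le_sum_of_subset (Finset.Ici_subset_Ici.2 (Fin.le_def.2 (by simp)))
  col_strict i h j hj := by
    have hlen : j < ∑ j ∈ Finset.Ioi i, ((segTail ℓ j).length + 1) + 1 := by
      rw [sum_Ioi_segTail, dif_pos h]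
      exact Nat.lt_succ_of_lt hj
    rw [segRow, List.getD_append _ _ _ _ (by rw [List.length_replicate]; exact hlen),
      List.getD_replicate _ hlen, List.getD_eq_getElem _ _ hj]
    rcases mem_segRow ℓ (List.getElem_mem hj) with he | he <;>
      exact ⟨by simp only at he; omega, by omega⟩
  marg_large := count_segRow_self ℓ

theorem ellD_ofSegments (hℓ : ∀ i, ℓ i r = 0 ∨ ℓ i (r + 1) = 0) (i : Fin (r - 1)) {x : ℕ}
    (hx : i.1 + 2 ≤ x) : ellD r (ofSegments ℓ hℓ) i x = if x ≤ 2 * r - i.1 then ℓ i x else 0 :=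
  count_segRow_of_ge ℓ i hx

end Construction

section Bijection

variable {r : ℕ}

/-- Inverse of `mergeIbar` on data with `ℓ_{i,r} ℓ_{i,r̄} = 0`: the common part of the
coefficients at codes `r` and `r + 1` becomes the number of `ī`-entries. -/
def splitIbar (r : ℕ) (n : Fin (r - 1) → ℕ → ℕ) (i : Fin (r - 1)) (x : ℕ) : ℕ :=
  if x = r ∨ x = r + 1 then n i x - min (n i r) (n i (r + 1))
  else if x = 2 * r - i.1 then min (n i r) (n i (r + 1))
  else n i x

theorem splitIbar_eq_zero_or (n : Fin (r - 1) → ℕ → ℕ) (i : Fin (r - 1)) :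
    splitIbar r n i r = 0 ∨ splitIbar r n i (r + 1) = 0 := by
  simp only [splitIbar, true_or, or_true, if_true]
  omega

theorem mergeIbar_splitIbar (n : Fin (r - 1) → ℕ → ℕ) (i : Fin (r - 1)) {x : ℕ}
    (hx : x < 2 * r - i.1) : mergeIbar r (splitIbar r n) i x = n i x := by
  have := i.2
  simp only [mergeIbar, splitIbar, if_neg (show ¬(2 * r - i.1 = r ∨ 2 * r - i.1 = r + 1) by omega),
    if_neg hx.ne]
  split_ifs with h
  · rcases h with rfl | rfl <;> omega
  · exact add_zero _

theorem splitIbar_mergeIbar {ℓ : Fin (r - 1) → ℕ → ℕ} {i : Fin (r - 1)}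
    (hℓ : ℓ i r = 0 ∨ ℓ i (r + 1) = 0) (x : ℕ) : splitIbar r (mergeIbar r ℓ) i x = ℓ i x := by
  have := i.2
  simp only [splitIbar, mergeIbar, true_or, or_true, if_true]
  split_ifs with hx hx'
  · rcases hx with rfl | rfl <;> omega
  · subst hx'
    omega
  · exact add_zero _

theorem splitIbar_congr {n n' : Fin (r - 1) → ℕ → ℕ} {i : Fin (r - 1)}
    (h : ∀ y ∈ Finset.Ico (i.1 + 2) (2 * r - i.1), n i y = n' i y) {x : ℕ}
    (hx : x ∈ Finset.Icc (i.1 + 2) (2 * r - i.1)) : splitIbar r n i x = splitIbar r n' i x := by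
  have := i.2
  simp only [Finset.mem_Icc, Finset.mem_Ico] at h hx
  simp only [splitIbar]
  rw [h r (by omega), h (r + 1) (by omega)]
  split_ifs
  · rw [h x (by omega)]
  · rfl
  · rw [h x (by omega)]

theorem mergeIbar_ellD_ofSegments (ℓ : Fin (r - 1) → ℕ → ℕ)
    (hℓ : ∀ i, ℓ i r = 0 ∨ ℓ i (r + 1) = 0) (i : Fin (r - 1)) {x : ℕ}
    (hx : x ∈ Finset.Ico (i.1 + 2) (2 * r - i.1)) :
    mergeIbar r (ellD r (ofSegments ℓ hℓ)) i x = mergeIbar r ℓ i x := by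
  have := i.2
  rw [Finset.mem_Ico] at hx
  simp only [mergeIbar, ellD_ofSegments ℓ hℓ i hx.1, if_pos hx.2.le,
    ellD_ofSegments ℓ hℓ i (show i.1 + 2 ≤ 2 * r - i.1 by omega), le_refl, if_true]

noncomputable def tabOfPartition (c : posRootsD r → ℕ) : TabD r :=
  ofSegments (splitIbar r fun i x => Function.extend Subtype.val c 0 (rootD r i x))
    (splitIbar_eq_zero_or _)

theorem XiD_tabOfPartition (c : posRootsD r → ℕ) (α : posRootsD r) :
    XiD r (tabOfPartition c) α = c α := by
  obtain ⟨v, hv⟩ := α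
  obtain ⟨i, x, hx, rfl⟩ := exists_rootD_eq hv
  rw [XiD_rootD _ i hx, tabOfPartition, mergeIbar_ellD_ofSegments _ _ i hx,
    mergeIbar_splitIbar _ i (Finset.mem_Ico.1 hx).2]
  exact Subtype.val_injective.extend_apply c 0 ⟨_, hv⟩

theorem tabOfPartition_XiD (T : TabD r) :
    tabOfPartition (fun α => XiD r T α) = T := by
  refine TabD.ext_of_ellD fun i x hx => ?_
  rw [tabOfPartition, ellD_ofSegments _ _ i hx]
  split_ifs with hx'
  · have hXi : ∀ y ∈ Finset.Ico (i.1 + 2) (2 * r - i.1),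
        Function.extend Subtype.val (fun α : posRootsD r => XiD r T α) 0 (rootD r i y) =
          mergeIbar r (ellD r T) i y := fun y hy => by
      rw [← XiD_rootD T i hy]
      exact Subtype.val_injective.extend_apply (fun α : posRootsD r => XiD r T α) 0
        ⟨_, rootD_mem i.2 hy⟩
    rw [splitIbar_congr hXi (Finset.mem_Icc.2 ⟨hx, hx'⟩), splitIbar_mergeIbar]
    by_contra! h
    exact T.not_both i ⟨List.count_pos_iff.1 (Nat.pos_of_ne_zero h.1),
      List.count_pos_iff.1 (Nat.pos_of_ne_zero h.2)⟩
  · exact (T.ellD_eq_zero_of_gt i (by omega)).symm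

noncomputable def partitionEquivTab : (posRootsD r → ℕ) ≃ TabD r where
  toFun := tabOfPartition
  invFun T α := XiD r T α
  left_inv c := funext (XiD_tabOfPartition c)
  right_inv := tabOfPartition_XiD

theorem negwtD_eq_sum (T : TabD r) : negwtD r T = ∑ α : posRootsD r, XiD r T α • α.1 :=
  (Finset.sum_coe_sort _ _).symm

theorem sizeD_eq_sum (T : TabD r) : sizeD r T = ∑ α : posRootsD r, XiD r T α := by
  rw [← sum_XiD, Finset.sum_coe_sort]

end Bijection

theorem stmt13_general (r : ℕ) :
    ∀ μ : Fin r → ℕ, ∀ d : ℕ,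
      Nat.card {c : {v // v ∈ posRootsD r} → ℕ //
          (∑ α : {v // v ∈ posRootsD r}, c α • α.1) = μ ∧
          (∑ α : {v // v ∈ posRootsD r}, c α) = d}
      = Nat.card {T : TabD r // negwtD r T = μ ∧ sizeD r T = d} := by
  intro μ d
  refine Nat.card_congr (Equiv.subtypeEquiv partitionEquivTab fun c => ?_)
  change _ ↔ negwtD r (tabOfPartition c) = μ ∧ sizeD r (tabOfPartition c) = d
  simp only [negwtD_eq_sum, sizeD_eq_sum, XiD_tabOfPartition]

/-- for every `μ` in the positive root lattice of `D_r`,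
Lusztig's `q`-analogue of the Kostant partition function satisfies
`𝒫(μ;q) = Σ_{T ∈ 𝒯(∞), -wt(T) = μ} q^{|T|}`, stated coefficientwise in `q`. -/
theorem stmt13 (r : ℕ) (hr : 4 ≤ r) :
    ∀ μ : Fin r → ℕ, ∀ d : ℕ,
      Nat.card {c : {v // v ∈ posRootsD r} → ℕ //
          (∑ α : {v // v ∈ posRootsD r}, c α • α.1) = μ ∧
          (∑ α : {v // v ∈ posRootsD r}, c α) = d}
      = Nat.card {T : TabD r // negwtD r T = μ ∧ sizeD r T = d} :=
  stmt13_general r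
end

section
/- For every μ in the positive root lattice of G_2, Lusztig's q-analogue of the Kostant partition function satisfies 𝒫(μ;q) = Σ_{T ∈ 𝒯(∞), −wt(T) = μ} q^{|T|} as polynomials in q (both sums are finite). -/
/-- The marginally large tableaux `𝒯(∞)` of type `G_2`, each determined by its
segment data `(ℓ_{1,2}, ℓ_{1,3}, ℓ_{1,0}, ℓ_{1,3̄}, ℓ_{1,2̄}, ℓ_{1,1̄}, ℓ_{2,3})`
with `ℓ_{1,0} ∈ {0,1}`. -/
structure TabG where
  l12 : ℕ
  l13 : ℕ
  l10 : ℕ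
  l13b : ℕ
  l12b : ℕ
  l11b : ℕ
  l23 : ℕ
  l10_le : l10 ≤ 1

/-- The set of positive roots of `G_2`
(`α_1, α_1+α_2, 2α_1+α_2, 3α_1+α_2, 3α_1+2α_2, α_2`), in simple-root
coordinates. -/
def posRootsG : Finset (Fin 2 → ℕ) :=
  {![1, 0], ![1, 1], ![2, 1], ![3, 1], ![3, 2], ![0, 1]}

/-- `Ξ(T)`, extended by zero to all vectors: `ℓ_{1,2}` at `α_1`, `ℓ_{1,3}` at
`α_1+α_2`, `2ℓ_{1,1̄} + ℓ_{1,0}` at `2α_1+α_2`, `ℓ_{1,3̄}` at `3α_1+α_2`,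
`ℓ_{1,2̄}` at `3α_1+2α_2`, and `ℓ_{2,3}` at `α_2`. -/
def XiG (T : TabG) (v : Fin 2 → ℕ) : ℕ :=
  (if v = ![1, 0] then T.l12 else 0) +
    (if v = ![1, 1] then T.l13 else 0) +
    (if v = ![2, 1] then 2 * T.l11b + T.l10 else 0) +
    (if v = ![3, 1] then T.l13b else 0) +
    (if v = ![3, 2] then T.l12b else 0) +
    (if v = ![0, 1] then T.l23 else 0)

/-- `seg′(T)`: the number of nonzero values among the seven segment data. -/
def segG' (T : TabG) : ℕ :=
  (if T.l12 ≠ 0 then 1 else 0) + (if T.l13 ≠ 0 then 1 else 0) +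
    (if T.l10 ≠ 0 then 1 else 0) + (if T.l13b ≠ 0 then 1 else 0) +
    (if T.l12b ≠ 0 then 1 else 0) + (if T.l11b ≠ 0 then 1 else 0) +
    (if T.l23 ≠ 0 then 1 else 0)

/-- `seg(T) = seg′(T) - 1` if the first row contains both a `0`-segment and a
`1̄`-segment, and `seg(T) = seg′(T)` otherwise. -/
def segG (T : TabG) : ℕ :=
  segG' T - (if T.l10 ≠ 0 ∧ T.l11b ≠ 0 then 1 else 0)

/-- `-wt(T) = Σ_α Ξ(T)(α)·α`, in simple-root coordinates. -/
def negwtG (T : TabG) : Fin 2 → ℕ :=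
  ∑ v ∈ posRootsG, XiG T v • v

/-- `|T|`: the number of boxes in the reduced form of `T`, counting each
`1̄`-box with multiplicity `2`. -/
def sizeG (T : TabG) : ℕ :=
  T.l12 + T.l13 + T.l10 + T.l13b + T.l12b + 2 * T.l11b + T.l23

/-!
`Ξ(T)` is already a Kostant partition of `-wt(T)`, and `Σ_α Ξ(T)(α) = |T|`. The map
`T ↦ Ξ(T)` is a bijection onto all Kostant partitions: every segment length is read off
directly, except at `2α_1+α_2`, where `2ℓ_{1,1̄} + ℓ_{1,0}` with `ℓ_{1,0} ∈ {0,1}` is division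
with remainder by `2`. Hence both sides count the same objects, degree by degree.
-/

abbrev PosRootG := {v : Fin 2 → ℕ // v ∈ posRootsG}

attribute [ext] TabG

namespace TabG

variable (T : TabG)

@[simp] lemma XiG_one_zero : XiG T ![1, 0] = T.l12 := by simp [XiG]
@[simp] lemma XiG_one_one : XiG T ![1, 1] = T.l13 := by simp [XiG]
@[simp] lemma XiG_two_one : XiG T ![2, 1] = 2 * T.l11b + T.l10 := by simp [XiG]
@[simp] lemma XiG_three_one : XiG T ![3, 1] = T.l13b := by simp [XiG]
@[simp] lemma XiG_three_two : XiG T ![3, 2] = T.l12b := by simp [XiG]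
@[simp] lemma XiG_zero_one : XiG T ![0, 1] = T.l23 := by simp [XiG]

def equivKostantPartition : TabG ≃ (PosRootG → ℕ) where
  toFun T α := XiG T α
  invFun c :=
    { l12 := c ⟨![1, 0], by decide⟩
      l13 := c ⟨![1, 1], by decide⟩
      l10 := c ⟨![2, 1], by decide⟩ % 2
      l13b := c ⟨![3, 1], by decide⟩
      l12b := c ⟨![3, 2], by decide⟩
      l11b := c ⟨![2, 1], by decide⟩ / 2
      l23 := c ⟨![0, 1], by decide⟩
      l10_le := Nat.le_of_lt_succ (Nat.mod_lt _ two_pos) }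
  left_inv T := by
    have := T.l10_le
    ext <;> dsimp only <;> simp only [XiG_one_zero, XiG_one_one, XiG_two_one, XiG_three_one,
      XiG_three_two, XiG_zero_one] <;> omega
  right_inv c := by
    funext ⟨v, hv⟩
    simp only [posRootsG, Finset.mem_insert, Finset.mem_singleton] at hv
    rcases hv with rfl | rfl | rfl | rfl | rfl | rfl
    · exact XiG_one_zero _
    · exact XiG_one_one _
    · exact (XiG_two_one _).trans (Nat.div_add_mod _ 2)
    · exact XiG_three_one _
    · exact XiG_three_two _
    · exact XiG_zero_one _

lemma sum_equivKostantPartition_smul :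
    ∑ α : PosRootG, equivKostantPartition T α • α.1 = negwtG T :=
  Finset.sum_coe_sort posRootsG fun v => XiG T v • v

lemma sum_equivKostantPartition : ∑ α : PosRootG, equivKostantPartition T α = sizeG T := by
  change ∑ α : PosRootG, XiG T α = sizeG T
  rw [Finset.sum_coe_sort posRootsG (XiG T), posRootsG, Finset.sum_insert (by decide),
    Finset.sum_insert (by decide), Finset.sum_insert (by decide), Finset.sum_insert (by decide),
    Finset.sum_insert (by decide), Finset.sum_singleton, XiG_one_zero, XiG_one_one, XiG_two_one,
    XiG_three_one, XiG_three_two, XiG_zero_one, sizeG]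
  ring

end TabG

/-- for every `μ` in the positive root lattice of `G_2`,
Lusztig's `q`-analogue of the Kostant partition function satisfies
`𝒫(μ;q) = Σ_{T ∈ 𝒯(∞), -wt(T) = μ} q^{|T|}`, stated coefficientwise in `q`. -/
theorem stmt14 :
    ∀ μ : Fin 2 → ℕ, ∀ d : ℕ,
      Nat.card {c : {v // v ∈ posRootsG} → ℕ //
          (∑ α : {v // v ∈ posRootsG}, c α • α.1) = μ ∧
          (∑ α : {v // v ∈ posRootsG}, c α) = d}
      = Nat.card {T : TabG // negwtG T = μ ∧ sizeG T = d} := by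
  intro μ d
  refine Nat.card_congr (TabG.equivKostantPartition.subtypeEquiv fun T => ?_).symm
  rw [TabG.sum_equivKostantPartition_smul, TabG.sum_equivKostantPartition]
end

section
/- For all dominant integral weights λ, μ of type A_r, the Kostka–Foulkes polynomial satisfies K_{λ,μ}(q) = Σ_{w ∈ W} (−1)^{ℓ(w)} Σ_{T ∈ 𝒯(∞), −wt(T) = w(λ+ρ)−(μ+ρ)} q^{|T|}, where the inner sum is over the finitely many T ∈ 𝒯(∞) with −wt(T) = w(λ+ρ)−(μ+ρ) (and is empty if w(λ+ρ)−(μ+ρ) does not lie in the positive root lattice). -/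
/-!
A marginally large tableau is determined by its multiplicities `ℓ_{i,k}` with `i < k`: the rows
are sorted, and row `i` must contain exactly one more `i` than row `i + 1` has boxes, which fixes
the diagonal entries from the bottom row up. Conversely every choice of these multiplicities is
realised, since putting enough `i`s in front of row `i` makes the columns strictly increasing. So
`T ↦ (ℓ_{i,k}(T))` identifies `𝒯(∞)` with the functions on the positive roots `ε_i - ε_k`, i.e.
with Kostant partitions, turning `-wt(T)` into the partitioned weight and `|T|` into the number of
parts. The two alternating sums therefore agree term by term.
-/

/-- Marginally large semistandard Young tableaux of type `A_r`, on the alphabet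
`{1 < 2 < ⋯ < r+1}`: exactly `r` rows (given as lists of entries), rows weakly
increasing, columns strictly increasing, first column `1, 2, …, r`, and the
number of `i`-entries in row `i` exceeds the number of boxes in row `i+1` by
exactly one. -/
structure TabA (r : ℕ) where
  row : Fin r → List ℕ
  entry_mem : ∀ i : Fin r, ∀ e ∈ row i, 1 ≤ e ∧ e ≤ r + 1
  row_weak : ∀ i : Fin r, (row i).Chain' (· ≤ ·)
  first_col : ∀ i : Fin r, (row i).head? = some (i.1 + 1)
  col_le : ∀ i : Fin r, ∀ h : i.1 + 1 < r,
    (row ⟨i.1 + 1, h⟩).length ≤ (row i).length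
  col_strict : ∀ i : Fin r, ∀ h : i.1 + 1 < r, ∀ j < (row ⟨i.1 + 1, h⟩).length,
    (row i).getD j 0 < (row ⟨i.1 + 1, h⟩).getD j 0
  marg_large : ∀ i : Fin r, (row i).count (i.1 + 1) =
    (if h : i.1 + 1 < r then (row ⟨i.1 + 1, h⟩).length else 0) + 1

/-- `ℓ_{i,k}(T)`: the number of `k`-entries in row `i` (rows of `T` are indexed by
`Fin r`, row `i : Fin r` having label `i+1`). -/
def ellA (r : ℕ) (T : TabA r) (i : Fin r) (k : ℕ) : ℕ := (T.row i).count k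

/-- `seg(T)`: the number of pairs `(i,k)` with `1 ≤ i < k ≤ r+1` and `ℓ_{i,k}(T) > 0`. -/
def segA (r : ℕ) (T : TabA r) : ℕ :=
  ∑ i : Fin r, ((Finset.Icc (i.1 + 2) (r + 1)).filter fun k => ellA r T i k ≠ 0).card

/-- The positive root `β_{i,k} = α_i + ⋯ + α_k` of `A_r`, as a vector of
coordinates in the simple roots. -/
def betaA (r : ℕ) (i k : ℕ) : Fin r → ℕ :=
  fun j => if i ≤ j.1 + 1 ∧ j.1 + 1 ≤ k then 1 else 0

/-- The set of positive roots `{β_{i,k} : 1 ≤ i ≤ k ≤ r}` of `A_r`. -/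
def posRootsA (r : ℕ) : Finset (Fin r → ℕ) :=
  ((Finset.Icc 1 r ×ˢ Finset.Icc 1 r).filter fun p => p.1 ≤ p.2).image
    fun p => betaA r p.1 p.2

/-- `Ξ(T)`, extended by zero to all vectors: `Ξ(T)(β_{i,k}) = ℓ_{i,k+1}(T)`. -/
def XiA (r : ℕ) (T : TabA r) (v : Fin r → ℕ) : ℕ :=
  ∑ i : Fin r, ∑ k ∈ Finset.Icc (i.1 + 1) r,
    if v = betaA r (i.1 + 1) k then ellA r T i (k + 1) else 0

/-- `-wt(T) = Σ_{1≤i<k≤r+1} ℓ_{i,k}(T)·(α_i + ⋯ + α_{k-1})`, in simple-root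
coordinates. -/
def negwtA (r : ℕ) (T : TabA r) : Fin r → ℕ :=
  ∑ i : Fin r, ∑ k ∈ Finset.Icc (i.1 + 2) (r + 1),
    ellA r T i k • betaA r (i.1 + 1) (k - 1)

/-- `wt(T)` as an integer vector in simple-root coordinates. -/
def wtA (r : ℕ) (T : TabA r) : Fin r → ℤ :=
  fun j => -(negwtA r T j : ℤ)

/-- `|T|`: the number of boxes in the reduced form of `T`. -/
def sizeA (r : ℕ) (T : TabA r) : ℕ :=
  ∑ i : Fin r, ∑ k ∈ Finset.Icc (i.1 + 2) (r + 1), ellA r T i k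

/-- The positive root `β_{i,k-1} = α_i + ⋯ + α_{k-1} = ε_i - ε_k` of `A_r`
(for `1 ≤ i < k ≤ r+1`), in the standard `ε`-coordinates on `ℤ^{r+1}`. -/
def epsRootA (r : ℕ) (i k : ℕ) : Fin (r + 1) → ℤ :=
  fun j => if j.1 + 1 = i then 1 else if j.1 + 1 = k then -1 else 0

/-- The set of positive roots `{ε_i - ε_k : 1 ≤ i < k ≤ r+1}` of `A_r` in
`ε`-coordinates. -/
def posRootsEpsA (r : ℕ) : Finset (Fin (r + 1) → ℤ) :=
  ((Finset.Icc 1 (r + 1) ×ˢ Finset.Icc 1 (r + 1)).filter fun p => p.1 < p.2).image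
    fun p => epsRootA r p.1 p.2

/-- `-wt(T) = Σ_{1≤i<k≤r+1} ℓ_{i,k}(T)·(ε_i - ε_k)` in `ε`-coordinates. -/
def negwtEpsA (r : ℕ) (T : TabA r) : Fin (r + 1) → ℤ :=
  ∑ i : Fin r, ∑ k ∈ Finset.Icc (i.1 + 2) (r + 1),
    ellA r T i k • epsRootA r (i.1 + 1) k

/-- The Weyl vector `ρ` of `A_r`, in `ε`-coordinates (normalized to the
integral representative `(r, r-1, …, 1, 0)`). -/
def rhoA (r : ℕ) : Fin (r + 1) → ℤ := fun j => (r : ℤ) - (j.1 : ℤ)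

/-- The Coxeter length of `w ∈ W = S_{r+1}`, i.e. its number of inversions. -/
def lenA (r : ℕ) (w : Equiv.Perm (Fin (r + 1))) : ℕ :=
  ((Finset.univ : Finset (Fin (r + 1) × Fin (r + 1))).filter
    fun p => p.1 < p.2 ∧ w p.2 < w p.1).card

/-- The weight `w(λ+ρ) - (μ+ρ)` in `ε`-coordinates, where `W = S_{r+1}` acts
on `ℤ^{r+1}` by permuting coordinates. -/
def shiftA (r : ℕ) (w : Equiv.Perm (Fin (r + 1))) (lam mu : Fin (r + 1) → ℤ) :
    Fin (r + 1) → ℤ :=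
  fun j => (lam (w.symm j) + rhoA r (w.symm j)) - (mu j + rhoA r j)

open Finset

lemma Fin.sum_Ioi_eq_dite {M : Type*} [AddCommMonoid M] {r : ℕ} (b : Fin r → M) (i : Fin r) :
    ∑ j ∈ Ioi i, b j = if h : i.1 + 1 < r then ∑ j ∈ Ici ⟨i.1 + 1, h⟩, b j else 0 := by
  split_ifs with h
  · congr 1
    ext j
    simp only [mem_Ioi, mem_Ici, Fin.lt_def, Fin.le_def]
    omega
  · refine sum_eq_zero fun j hj => absurd (mem_Ioi.1 hj) ?_
    rw [Fin.lt_def]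
    omega

lemma Fin.eq_sum_Ici_of_eq_add_dite {M : Type*} [AddCommMonoid M] {r : ℕ} {a b : Fin r → M}
    (h : ∀ i : Fin r, a i = b i + if h : i.1 + 1 < r then a ⟨i.1 + 1, h⟩ else 0)
    (i : Fin r) : a i = ∑ j ∈ Ici i, b j := by
  induction hn : r - i.1 generalizing i with
  | zero => omega
  | succ n ih =>
    rw [h i, Ici_eq_cons_Ioi, Finset.sum_cons, Fin.sum_Ioi_eq_dite]
    split_ifs with hi
    · rw [ih _ (by simp only; omega)]
    · rfl

/-- The pairs `(i, k)` with `i : Fin r` and `i + 2 ≤ k ≤ r + 1`: row `i` of a tableau carries the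
label `i + 1`, so these index both the multiplicities `ℓ_{i+1,k}` and the positive roots
`ε_{i+1} - ε_k`. -/
def rootPairsA (r : ℕ) : Finset (Σ _ : Fin r, ℕ) :=
  univ.sigma fun i => Icc (i.1 + 2) (r + 1)

lemma mem_rootPairsA {r : ℕ} {p : Σ _ : Fin r, ℕ} :
    p ∈ rootPairsA r ↔ p.1.1 + 2 ≤ p.2 ∧ p.2 ≤ r + 1 := by
  simp [rootPairsA]

lemma sum_sum_Icc_eq_sum_rootPairsA {M : Type*} [AddCommMonoid M] {r : ℕ} (f : Fin r → ℕ → M) :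
    ∑ i : Fin r, ∑ k ∈ Icc (i.1 + 2) (r + 1), f i k = ∑ p : rootPairsA r, f p.1.1 p.1.2 := by
  rw [sum_sigma', ← sum_coe_sort]
  rfl

lemma eq_and_eq_of_epsRootA_eq {r a b a' b' : ℕ} (ha : 1 ≤ a) (hab : a < b) (hb : b ≤ r + 1)
    (ha' : 1 ≤ a') (hab' : a' < b')
    (h : epsRootA r a b = epsRootA r a' b') : a = a' ∧ b = b' := by
  have h1 := congrFun h ⟨a - 1, by omega⟩
  have h2 := congrFun h ⟨b - 1, by omega⟩
  simp only [epsRootA] at h1 h2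
  split_ifs at h1 h2 <;> omega

lemma mem_posRootsEpsA {r : ℕ} {v : Fin (r + 1) → ℤ} :
    v ∈ posRootsEpsA r ↔ ∃ p ∈ rootPairsA r, epsRootA r (p.1.1 + 1) p.2 = v := by
  simp only [posRootsEpsA, mem_image, mem_filter, mem_product, mem_Icc, mem_rootPairsA]
  constructor
  · rintro ⟨⟨a, b⟩, ⟨⟨⟨ha, -⟩, -, hb⟩, hab⟩, rfl⟩
    exact ⟨⟨⟨a - 1, by omega⟩, b⟩, ⟨by simp only; omega, hb⟩, by simp only; congr; omega⟩
  · rintro ⟨⟨i, k⟩, ⟨hik, hk⟩, rfl⟩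
    simp only at hik hk
    exact ⟨(i.1 + 1, k), ⟨⟨⟨by omega, by omega⟩, by omega, hk⟩, by simp only; omega⟩, rfl⟩

noncomputable def rootPairsEquivA (r : ℕ) : rootPairsA r ≃ {v // v ∈ posRootsEpsA r} :=
  Equiv.ofBijective
    (fun p => ⟨epsRootA r (p.1.1.1 + 1) p.1.2, mem_posRootsEpsA.2 ⟨p.1, p.2, rfl⟩⟩)
    ⟨fun p q hpq => by
      have hp := mem_rootPairsA.1 p.2
      have hq := mem_rootPairsA.1 q.2
      obtain ⟨hi, hk⟩ := eq_and_eq_of_epsRootA_eq (by omega) (by omega) hp.2 (by omega) (by omega)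
        (congrArg Subtype.val hpq)
      exact Subtype.ext (Sigma.ext (Fin.ext (by omega)) (heq_of_eq hk)),
    fun v => by
      obtain ⟨p, hp, hv⟩ := mem_posRootsEpsA.1 v.2
      exact ⟨⟨p, hp⟩, Subtype.ext hv⟩⟩

namespace TabA

variable {r : ℕ}

lemma ext_row {T T' : TabA r} (h : T.row = T'.row) : T = T' := by
  cases T; cases T'; cases h; rfl

lemma pairwise_row (T : TabA r) (i : Fin r) : (T.row i).Pairwise (· ≤ ·) :=
  List.isChain_iff_pairwise.1 (T.row_weak i)

lemma ext_count {T T' : TabA r} (h : ∀ i x, (T.row i).count x = (T'.row i).count x) :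
    T = T' :=
  ext_row <| funext fun i =>
    (List.perm_iff_count.2 (h i)).eq_of_pairwise' (T.pairwise_row i) (T'.pairwise_row i)

lemma le_of_mem_row (T : TabA r) {i : Fin r} {x : ℕ} (hx : x ∈ T.row i) : i.1 + 1 ≤ x := by
  have hhead := T.first_col i
  have hsorted := T.pairwise_row i
  cases hrow : T.row i with
  | nil => simp [hrow] at hhead
  | cons a t =>
    rw [hrow, List.head?_cons, Option.some_inj] at hhead
    rw [hrow, List.pairwise_cons] at hsorted
    rw [hrow, List.mem_cons] at hx
    rcases hx with rfl | hx
    · exact hhead.ge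
    · exact hhead ▸ hsorted.1 x hx

lemma count_row_eq_zero (T : TabA r) {i : Fin r} {x : ℕ} (hx : ¬(i.1 + 1 ≤ x ∧ x ≤ r + 1)) :
    (T.row i).count x = 0 :=
  List.count_eq_zero.2 fun hmem => hx ⟨T.le_of_mem_row hmem, (T.entry_mem i x hmem).2⟩

lemma length_row_eq_count_add (T : TabA r) (i : Fin r) :
    (T.row i).length = (T.row i).count (i.1 + 1) + ∑ k ∈ Icc (i.1 + 2) (r + 1), ellA r T i k := by
  have hmem : ∀ x ∈ (T.row i : Multiset ℕ), x ∈ Icc (i.1 + 1) (r + 1) := fun x hx =>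
    mem_Icc.2 ⟨T.le_of_mem_row hx, (T.entry_mem i x hx).2⟩
  rw [← Multiset.coe_card, ← Multiset.sum_count_eq_card hmem,
    Icc_eq_cons_Ioc (by omega), Finset.sum_cons, ← Icc_add_one_left_eq_Ioc]
  simp only [Multiset.coe_count, ellA]
  rfl

lemma length_row_eq_sum (T : TabA r) (i : Fin r) :
    (T.row i).length = ∑ j ∈ Ici i, (∑ k ∈ Icc (j.1 + 2) (r + 1), ellA r T j k + 1) :=
  Fin.eq_sum_Ici_of_eq_add_dite (a := fun j => (T.row j).length) (fun j => by
    rw [length_row_eq_count_add, T.marg_large j]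
    ring) i

def mult (T : TabA r) (p : rootPairsA r) : ℕ := ellA r T p.1.1 p.1.2

lemma mult_injective : Function.Injective (mult : TabA r → rootPairsA r → ℕ) := by
  intro T T' h
  have hell : ∀ i k, k ∈ Icc (i.1 + 2) (r + 1) → ellA r T i k = ellA r T' i k := fun i k hk =>
    congrFun h ⟨⟨i, k⟩, mem_rootPairsA.2 (mem_Icc.1 hk)⟩
  have hlength : ∀ i, (T.row i).length = (T'.row i).length := fun i => by
    simp only [length_row_eq_sum]
    exact sum_congr rfl fun j _ => by rw [sum_congr rfl (hell j)]
  refine ext_count fun i x => ?_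
  by_cases hdiag : x = i.1 + 1
  · subst hdiag
    rw [T.marg_large, T'.marg_large]
    split_ifs <;> simp only [hlength]
  by_cases hx : x ∈ Icc (i.1 + 2) (r + 1)
  · exact hell i x hx
  · rw [mem_Icc] at hx
    rw [T.count_row_eq_zero (by omega), T'.count_row_eq_zero (by omega)]

section OfMult

variable (g : Fin r → ℕ → ℕ)

def tailOfMult (i : Fin r) : Multiset ℕ :=
  ∑ k ∈ Icc (i.1 + 2) (r + 1), Multiset.replicate (g i k) k

/-- Marginal largeness forces row `i` to hold one more `i + 1` than row `i + 1` has boxes; going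
down the rows, that length is the number of entries `≥ j + 2` of each row `j > i`, plus one per
row. -/
def diagOfMult (i : Fin r) : ℕ := ∑ j ∈ Ioi i, (Multiset.card (tailOfMult g j) + 1) + 1

def rowOfMult (i : Fin r) : List ℕ :=
  List.replicate (diagOfMult g i) (i.1 + 1) ++ (tailOfMult g i).sort

variable {g}

lemma mem_tailOfMult {i : Fin r} {x : ℕ} (hx : x ∈ tailOfMult g i) :
    i.1 + 2 ≤ x ∧ x ≤ r + 1 := by
  obtain ⟨k, hk, hx⟩ := Multiset.mem_sum.1 hx
  rw [Multiset.eq_of_mem_replicate hx]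
  exact mem_Icc.1 hk

lemma count_tailOfMult {i : Fin r} {k : ℕ} (hk : k ∈ Icc (i.1 + 2) (r + 1)) :
    (tailOfMult g i).count k = g i k := by
  simp only [tailOfMult, Multiset.count_sum', Multiset.count_replicate, sum_ite_eq', if_pos hk]

lemma length_rowOfMult (i : Fin r) :
    (rowOfMult g i).length = ∑ j ∈ Ici i, (Multiset.card (tailOfMult g j) + 1) := by
  rw [rowOfMult, diagOfMult, List.length_append, List.length_replicate, Multiset.length_sort,
    Ici_eq_cons_Ioi, Finset.sum_cons]
  ring

lemma diagOfMult_eq (i : Fin r) :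
    diagOfMult g i = (if h : i.1 + 1 < r then (rowOfMult g ⟨i.1 + 1, h⟩).length else 0) + 1 := by
  rw [diagOfMult, Fin.sum_Ioi_eq_dite]
  split_ifs <;> simp only [length_rowOfMult]

lemma mem_rowOfMult {i : Fin r} {x : ℕ} (hx : x ∈ rowOfMult g i) : i.1 + 1 ≤ x ∧ x ≤ r + 1 := by
  rcases List.mem_append.1 hx with hx | hx
  · rw [List.eq_of_mem_replicate hx]
    omega
  · have := mem_tailOfMult ((Multiset.mem_sort _).1 hx)
    omega

lemma pairwise_rowOfMult (i : Fin r) : (rowOfMult g i).Pairwise (· ≤ ·) := by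
  refine List.pairwise_append.2 ⟨List.pairwise_replicate.2 (Or.inr le_rfl),
    Multiset.pairwise_sort _ _, fun a ha b hb => ?_⟩
  rw [List.eq_of_mem_replicate ha]
  have := mem_tailOfMult ((Multiset.mem_sort _).1 hb)
  omega

lemma count_rowOfMult {i : Fin r} {k : ℕ} (hk : k ∈ Icc (i.1 + 2) (r + 1)) :
    (rowOfMult g i).count k = g i k := by
  rw [rowOfMult, List.count_append, List.count_replicate, ← Multiset.coe_count,
    Multiset.sort_eq, count_tailOfMult hk]
  have : i.1 + 1 ≠ k := by rw [mem_Icc] at hk; omega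
  simp [this]

lemma count_rowOfMult_self (i : Fin r) : (rowOfMult g i).count (i.1 + 1) = diagOfMult g i := by
  rw [rowOfMult, List.count_append, List.count_replicate_self, List.count_eq_zero.2, add_zero]
  intro hmem
  have := mem_tailOfMult ((Multiset.mem_sort _).1 hmem)
  omega

lemma getD_rowOfMult {i : Fin r} {j : ℕ} (hj : j < diagOfMult g i) :
    (rowOfMult g i).getD j 0 = i.1 + 1 := by
  have hj' : j < (List.replicate (diagOfMult g i) (i.1 + 1)).length := by
    rwa [List.length_replicate]
  rw [rowOfMult, List.getD_append _ _ _ _ hj', List.getD_eq_getElem _ _ hj',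
    List.getElem_replicate]

variable (g) in
def ofMult : TabA r where
  row := rowOfMult g
  entry_mem i e he := ⟨by have := (mem_rowOfMult he).1; omega, (mem_rowOfMult he).2⟩
  row_weak i := List.isChain_iff_pairwise.2 (pairwise_rowOfMult i)
  first_col i := by
    rw [rowOfMult, diagOfMult, List.replicate_succ, List.cons_append, List.head?_cons]
  col_le i h := by
    have hdiag := diagOfMult_eq (g := g) i
    rw [dif_pos h] at hdiag
    have := (count_rowOfMult_self (g := g) i).symm.trans_le List.count_le_length
    simp only [rowOfMult] at hdiag this ⊢
    omega
  col_strict i h j hj := by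
    have hdiag := diagOfMult_eq (g := g) i
    rw [dif_pos h] at hdiag
    have hmem := mem_rowOfMult (List.getD_eq_getElem _ 0 hj ▸ List.getElem_mem hj)
    rw [getD_rowOfMult (by omega)]
    simp only at hmem
    omega
  marg_large i := by rw [count_rowOfMult_self, diagOfMult_eq]

lemma ellA_ofMult {i : Fin r} {k : ℕ} (hk : k ∈ Icc (i.1 + 2) (r + 1)) :
    ellA r (ofMult g) i k = g i k :=
  count_rowOfMult hk

end OfMult

noncomputable def multEquiv : TabA r ≃ (rootPairsA r → ℕ) :=
  Equiv.ofBijective mult ⟨mult_injective, fun f =>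
    ⟨ofMult fun i k => if h : ⟨i, k⟩ ∈ rootPairsA r then f ⟨_, h⟩ else 0,
      funext fun p => (ellA_ofMult (mem_Icc.2 (mem_rootPairsA.1 p.2))).trans (dif_pos p.2)⟩⟩

lemma negwtEpsA_eq_sum_mult (T : TabA r) :
    negwtEpsA r T = ∑ p, T.mult p • (rootPairsEquivA r p : Fin (r + 1) → ℤ) :=
  sum_sum_Icc_eq_sum_rootPairsA _

lemma sizeA_eq_sum_mult (T : TabA r) : sizeA r T = ∑ p, T.mult p :=
  sum_sum_Icc_eq_sum_rootPairsA _

end TabA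

noncomputable def kostantEquivTabA (r : ℕ) : ({v // v ∈ posRootsEpsA r} → ℕ) ≃ TabA r :=
  ((rootPairsEquivA r).arrowCongr (Equiv.refl ℕ)).symm.trans TabA.multEquiv.symm

lemma mult_kostantEquivTabA {r : ℕ} (c : {v // v ∈ posRootsEpsA r} → ℕ) :
    (kostantEquivTabA r c).mult = c ∘ rootPairsEquivA r :=
  TabA.multEquiv.apply_symm_apply _

noncomputable def kostantPartitionEquivTabA (r : ℕ) (ν : Fin (r + 1) → ℤ) (d : ℕ) :
    {c : {v // v ∈ posRootsEpsA r} → ℕ // ∑ α, c α • α.1 = ν ∧ ∑ α, c α = d} ≃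
      {T : TabA r // negwtEpsA r T = ν ∧ sizeA r T = d} :=
  (kostantEquivTabA r).subtypeEquiv fun c => by
    rw [TabA.negwtEpsA_eq_sum_mult, TabA.sizeA_eq_sum_mult, mult_kostantEquivTabA,
      ← (rootPairsEquivA r).sum_comp (fun α => c α • α.1), ← (rootPairsEquivA r).sum_comp c]
    rfl

theorem stmt15_general (r : ℕ) (lam mu : Fin (r + 1) → ℤ) :
    ∀ d : ℕ,
      (∑ w : Equiv.Perm (Fin (r + 1)), (-1 : ℤ) ^ lenA r w *
        Nat.card {c : {v // v ∈ posRootsEpsA r} → ℕ //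
          (∑ α : {v // v ∈ posRootsEpsA r}, c α • α.1) = shiftA r w lam mu ∧
          (∑ α : {v // v ∈ posRootsEpsA r}, c α) = d})
      = ∑ w : Equiv.Perm (Fin (r + 1)), (-1 : ℤ) ^ lenA r w *
          Nat.card {T : TabA r //
            negwtEpsA r T = shiftA r w lam mu ∧ sizeA r T = d} := by
  intro d
  refine Finset.sum_congr rfl fun w _ => ?_
  rw [Nat.card_congr (kostantPartitionEquivTabA r (shiftA r w lam mu) d)]

/-- for dominant integral weights `λ, μ` of type `A_r` (given by
weakly decreasing `ε`-coordinates), the Kostka–Foulkes polynomial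
`K_{λ,μ}(q) = Σ_{w∈W} (-1)^{ℓ(w)} 𝒫(w(λ+ρ)-(μ+ρ); q)` satisfies
`K_{λ,μ}(q) = Σ_{w∈W} (-1)^{ℓ(w)} Σ_{T ∈ 𝒯(∞), -wt(T) = w(λ+ρ)-(μ+ρ)} q^{|T|}`,
stated coefficientwise in `q`. -/
theorem stmt15 (r : ℕ) (hr : 1 ≤ r) (lam mu : Fin (r + 1) → ℤ)
    (hlam : Antitone lam) (hmu : Antitone mu) :
    ∀ d : ℕ,
      (∑ w : Equiv.Perm (Fin (r + 1)), (-1 : ℤ) ^ lenA r w *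
        Nat.card {c : {v // v ∈ posRootsEpsA r} → ℕ //
          (∑ α : {v // v ∈ posRootsEpsA r}, c α • α.1) = shiftA r w lam mu ∧
          (∑ α : {v // v ∈ posRootsEpsA r}, c α) = d})
      = ∑ w : Equiv.Perm (Fin (r + 1)), (-1 : ℤ) ^ lenA r w *
          Nat.card {T : TabA r //
            negwtEpsA r T = shiftA r w lam mu ∧ sizeA r T = d} :=
  stmt15_general r lam mu
end
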